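/- arXiv:2410.11183 — 7 statements merged into one kernel-verified Lean document; each statement's English description precedes it below -/
import Mathlib

section
/- Let G be a 2-connected simple graph of order n ≥ 6 such that every edge of G lies in a triangle. Then the number of edges of G satisfies e(G) ≥ ⌈3n/2⌉. -/
/-- Number of edges of a simple graph. -/
noncomputable def numEdges {V : Type*} (G : SimpleGraph V) : ℕ := Nat.card G.edgeSet

/-- Every edge of `G` lies in a triangle. -/
def EveryEdgeInTriangle {V : Type*} (G : SimpleGraph V) : Prop :=
  ∀ ⦃u v : V⦄, G.Adj u v → ∃ w, G.Adj u w ∧ G.Adj v w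

/-- `G` is 2-connected: it has at least 3 vertices and deleting any single vertex
leaves a connected graph. -/
def TwoConnected {V : Type*} (G : SimpleGraph V) : Prop :=
  3 ≤ Nat.card V ∧ ∀ v : V, (G.induce ({v}ᶜ : Set V)).Connected

/-- `G` is 3-connected: it has at least 4 vertices and deleting any set of at most 2
vertices leaves a connected graph. -/
def ThreeConnected {V : Type*} (G : SimpleGraph V) : Prop :=
  4 ≤ Nat.card V ∧ ∀ S : Set V, S.ncard ≤ 2 → (G.induce (Sᶜ : Set V)).Connected

/-- `G` is edge-pancyclic: every edge lies in a cycle of each length `k` with `3 ≤ k ≤ |V|`. -/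
def EdgePancyclic {V : Type*} (G : SimpleGraph V) : Prop :=
  ∀ k : ℕ, 3 ≤ k → k ≤ Nat.card V → ∀ ⦃u v : V⦄, G.Adj u v →
    ∃ c : G.Walk u u, c.IsCycle ∧ c.length = k ∧ s(u, v) ∈ c.edges

/-- Base relation for the graph `A_n` (`n = 2q`): vertices `inl i` are the cycle
vertices `vᵢ`, vertices `inr i` are the added vertices `uᵢ`; `vᵢ ~ vᵢ₊₁`,
`uᵢ ~ vᵢ` and `uᵢ ~ vᵢ₊₁`. -/
def ARel (q : ℕ) : (ZMod q ⊕ ZMod q) → (ZMod q ⊕ ZMod q) → Prop :=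
  fun x y => match x, y with
    | Sum.inl a, Sum.inl b => a = b + 1
    | Sum.inr a, Sum.inl b => b = a ∨ b = a + 1
    | _, _ => False

/-- The graph `A_n` where `n = 2q`. -/
def graphA (q : ℕ) : SimpleGraph (ZMod q ⊕ ZMod q) := SimpleGraph.fromRel (ARel q)

/-- The graph `F_n` where `n = 2q + 1`: `A_{n-1}` plus a new vertex (`none`)
adjacent to `v₁` and `v₂`. -/
def graphF (q : ℕ) : SimpleGraph (Option (ZMod q ⊕ ZMod q)) :=
  SimpleGraph.fromRel (fun x y => match x, y with
    | some a, some b => ARel q a b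
    | none, some w => w = Sum.inl 1 ∨ w = Sum.inl 2
    | _, _ => False)

/-- The graph `G_n` where `n = 2q + 1`: `A_{n-1}` plus a new vertex (`none`)
adjacent to `u₁` and `v₁`. -/
def graphG (q : ℕ) : SimpleGraph (Option (ZMod q ⊕ ZMod q)) :=
  SimpleGraph.fromRel (fun x y => match x, y with
    | some a, some b => ARel q a b
    | none, some w => w = Sum.inr 1 ∨ w = Sum.inl 1
    | _, _ => False)

/-- The graph `H_n` where `n = 2q + 1`: `A_{n-1}` with the edge `v₁v₂` subdivided by a
new vertex (`none`), which is moreover joined to `u₁`. -/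
def graphH (q : ℕ) : SimpleGraph (Option (ZMod q ⊕ ZMod q)) :=
  SimpleGraph.fromRel (fun x y => match x, y with
    | some (Sum.inl a), some (Sum.inl b) =>
        a = b + 1 ∧ ¬(a = 2 ∧ b = 1) ∧ ¬(a = 1 ∧ b = 2)
    | some a, some b => ARel q a b
    | none, some w => w = Sum.inl 1 ∨ w = Sum.inl 2 ∨ w = Sum.inr 1
    | _, _ => False)

/-- The wheel graph of order `n`: the hub `none` joined to every vertex of the
cycle `C_{n-1}` on `ZMod (n-1)`. -/
def wheelGraph (n : ℕ) : SimpleGraph (Option (ZMod (n - 1))) :=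
  SimpleGraph.fromRel (fun x y => match x, y with
    | some a, some b => a = b + 1
    | none, some _ => True
    | _, _ => False)

/-!
Let `D` be the set of vertices of degree two and `W` its complement, the core. Since every edge
lies in a triangle and `G` is 2-connected with at least four vertices, `D` is independent and the
two neighbours of a vertex of `D` are adjacent vertices of `W`. Counting the edges between `D`
and `W` gives `∑ deg = 4|D| + ∑_{w ∈ W} c(w)`, where `c(w)` is the number of neighbours of `w`
in `W`, so `2e ≥ 3n` becomes `3|W| ≤ |D| + ∑_W c`.

If `W` is a clique on at most three vertices this is a direct count, using `n ≥ 6`. Otherwise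
every vertex has `c ≥ 2`, and we discharge: `w ∈ W` gets charge `a(w) + 2c(w) - 6`, where `a(w)`
counts its neighbours in `D`, and the charges sum to twice the slack. Only the deficient vertices
(`a = 1`, `c = 2`) are negative, with charge `-1`; such an `x` hands its deficit across its
neighbour `v ∈ D` to the other neighbour `y` of `v`, which has `c(y) ≥ 3` and hence surplus at
least `a(y)`, and distinct deficient vertices use distinct edges `y v`.
-/

open Finset

section TwoConnected

variable {V : Type*} [Fintype V] [DecidableEq V] {G : SimpleGraph V} [DecidableRel G.Adj]

theorem TwoConnected.univ_eq_insert (h2 : TwoConnected G) {A : Finset V} {a t : V}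
    (ha : a ∈ A) (htA : t ∉ A) (hA : ∀ b ∈ A, G.neighborFinset b ⊆ insert t A) :
    (univ : Finset V) = insert t A := by
  refine (eq_univ_of_forall fun b => ?_).symm
  by_cases hbt : b = t
  · exact hbt ▸ mem_insert_self t A
  by_contra hb
  obtain ⟨p⟩ := (h2.2 t).preconnected ⟨a, fun h => htA (h ▸ ha)⟩ ⟨b, hbt⟩
  obtain ⟨d, -, hd, hd'⟩ :=
    p.exists_boundary_dart {x | (x : V) ∈ A} ha fun h => hb (mem_insert_of_mem h)
  rcases mem_insert.1 (hA _ hd ((G.mem_neighborFinset _ _).2 d.adj)) with h | h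
  · exact d.snd.2 h
  · exact hd' h

theorem TwoConnected.exists_adj (h2 : TwoConnected G) (v : V) : ∃ u, G.Adj v u := by
  by_contra! hv
  have h3 := h2.1
  rw [Nat.card_eq_fintype_card] at h3
  obtain ⟨t, htv⟩ := Fintype.exists_ne_of_one_lt_card (by omega) v
  have huniv := h2.univ_eq_insert (mem_singleton_self v) (by simpa using htv)
    fun b hb c hc => absurd ((G.mem_neighborFinset _ _).1 hc) (mem_singleton.1 hb ▸ hv c)
  have := card_insert_le t {v}
  rw [← huniv, card_univ, card_singleton] at this
  omega

end TwoConnected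

namespace SimpleGraph

variable {V : Type*} [Fintype V] (G : SimpleGraph V) [DecidableRel G.Adj]

def degTwoSet : Finset V := {v | G.degree v = 2}

variable {G} in
@[simp]
theorem mem_degTwoSet {v : V} : v ∈ G.degTwoSet ↔ G.degree v = 2 := by
  simp [degTwoSet]

variable [DecidableEq V]

def degTwoNbrCount (w : V) : ℕ := #(G.neighborFinset w ∩ G.degTwoSet)

def otherNbrCount (w : V) : ℕ := #(G.neighborFinset w \ G.degTwoSet)

def Deficient (w : V) : Prop := G.degTwoNbrCount w = 1 ∧ G.otherNbrCount w = 2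

instance : DecidablePred G.Deficient := fun _ => inferInstanceAs (Decidable (_ ∧ _))

def HasSmallCore : Prop :=
  ∃ K : Finset V, G.degTwoSetᶜ ⊆ K ∧ G.IsClique (K : Set V) ∧ #K ≤ 3

variable {G}

theorem degTwoNbrCount_add_otherNbrCount (w : V) :
    G.degTwoNbrCount w + G.otherNbrCount w = G.degree w := by
  rw [degTwoNbrCount, otherNbrCount, card_inter_add_card_sdiff, card_neighborFinset_eq_degree]

theorem Deficient.notMem_degTwoSet {w : V} (hw : G.Deficient w) : w ∉ G.degTwoSet := by
  have := degTwoNbrCount_add_otherNbrCount (G := G) w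
  rw [hw.1, hw.2] at this
  simp [← this]

theorem neighborFinset_eq_pair {v x y : V} (hv : G.degree v = 2) (hx : G.Adj v x)
    (hy : G.Adj v y) (hxy : x ≠ y) : G.neighborFinset v = {x, y} := by
  refine (eq_of_subset_of_card_le ?_ ?_).symm
  · simp [insert_subset_iff, hx, hy]
  · rw [card_neighborFinset_eq_degree, hv, card_pair hxy]

theorem exists_neighborFinset_eq_pair (htri : EveryEdgeInTriangle G) {v x : V}
    (hv : G.degree v = 2) (hx : G.Adj v x) :
    ∃ y, G.Adj x y ∧ G.neighborFinset v = {x, y} := by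
  obtain ⟨y, hvy, hxy⟩ := htri hx
  exact ⟨y, hxy, neighborFinset_eq_pair hv hx hvy (G.ne_of_adj hxy)⟩

theorem not_adj_of_mem_degTwoSet (h2 : TwoConnected G) (htri : EveryEdgeInTriangle G)
    (hn : 4 ≤ Fintype.card V) {u v : V} (hu : u ∈ G.degTwoSet) (hv : v ∈ G.degTwoSet) :
    ¬ G.Adj u v := by
  intro huv
  obtain ⟨y, hvy, hNu⟩ := exists_neighborFinset_eq_pair htri (mem_degTwoSet.1 hu) huv
  have huy : G.Adj u y := (G.mem_neighborFinset _ _).1 (by simp [hNu])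
  have hNv := neighborFinset_eq_pair (mem_degTwoSet.1 hv) huv.symm hvy (G.ne_of_adj huy)
  have huniv := h2.univ_eq_insert (t := y) (mem_insert_self u {v})
    (by simp [(G.ne_of_adj huy).symm, (G.ne_of_adj hvy).symm])
    (by simp [hNu, hNv, insert_subset_iff])
  have := card_le_three (a := y) (b := u) (c := v)
  rw [← huniv, card_univ] at this
  omega

theorem exists_adj_notMem_degTwoSet (h2 : TwoConnected G) (htri : EveryEdgeInTriangle G)
    (hn : 4 ≤ Fintype.card V) (w : V) : ∃ y, G.Adj w y ∧ y ∉ G.degTwoSet := by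
  obtain ⟨u, hu⟩ := h2.exists_adj w
  by_cases huD : u ∈ G.degTwoSet
  · obtain ⟨y, hwy, hNu⟩ := exists_neighborFinset_eq_pair htri (mem_degTwoSet.1 huD) hu.symm
    have huy : G.Adj u y := (G.mem_neighborFinset _ _).1 (by simp [hNu])
    exact ⟨y, hwy, fun hy => not_adj_of_mem_degTwoSet h2 htri hn huD hy huy⟩
  · exact ⟨u, hu, huD⟩

/-- A degree-two neighbour of `S` sees, besides its neighbour `s ∈ S`, only a neighbour of `s` in
the core, so `S` together with its degree-two neighbours is cut off from the rest by `t`. -/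
theorem compl_degTwoSet_subset_insert (h2 : TwoConnected G) (htri : EveryEdgeInTriangle G)
    (hn : 4 ≤ Fintype.card V) {S : Finset V} {s t : V} (hs : s ∈ S) (htS : t ∉ S)
    (ht : t ∉ G.degTwoSet) (hS : ∀ s ∈ S, G.neighborFinset s \ G.degTwoSet ⊆ insert t S) :
    G.degTwoSetᶜ ⊆ insert t S := by
  set A := S ∪ {d ∈ G.degTwoSet | ∃ s ∈ S, G.Adj s d}
  have hSA : insert t S ⊆ insert t A := insert_subset_insert t subset_union_left
  have hA : ∀ b ∈ A, G.neighborFinset b ⊆ insert t A := by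
    intro b hb c hc
    rw [mem_neighborFinset] at hc
    rcases mem_union.1 hb with hbS | hbD
    · by_cases hcD : c ∈ G.degTwoSet
      · exact mem_insert_of_mem (mem_union_right _ (mem_filter.2 ⟨hcD, b, hbS, hc⟩))
      · exact hSA (hS b hbS (mem_sdiff.2 ⟨(G.mem_neighborFinset _ _).2 hc, hcD⟩))
    · obtain ⟨hbD, s', hs'S, hs'b⟩ := mem_filter.1 hbD
      obtain ⟨p, hs'p, hNb⟩ :=
        exists_neighborFinset_eq_pair htri (mem_degTwoSet.1 hbD) hs'b.symm
      have hbp : G.Adj b p := (G.mem_neighborFinset _ _).1 (by simp [hNb])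
      have hc' : c = s' ∨ c = p := by simpa [hNb] using (G.mem_neighborFinset _ _).2 hc
      rcases hc' with rfl | rfl
      · exact mem_insert_of_mem (mem_union_left _ hs'S)
      · refine hSA (hS s' hs'S (mem_sdiff.2 ⟨(G.mem_neighborFinset _ _).2 hs'p, ?_⟩))
        exact fun hcD => not_adj_of_mem_degTwoSet h2 htri hn hbD hcD hbp
  have huniv := h2.univ_eq_insert (mem_union_left _ hs) (by simp [htS, ht]) hA
  intro w hw
  have hwA : w ∈ insert t A := huniv ▸ mem_univ w
  simp only [A, mem_insert, mem_union, mem_filter] at hwA ⊢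
  have := mem_compl.1 hw
  tauto

theorem three_mul_card_compl_le_of_hasSmallCore (hn : 6 ≤ Fintype.card V)
    (hsmall : G.HasSmallCore) :
    3 * #G.degTwoSetᶜ ≤ #G.degTwoSet + ∑ w ∈ G.degTwoSetᶜ, G.otherNbrCount w := by
  obtain ⟨K, hWK, hK, hK3⟩ := hsmall
  have hW : G.IsClique (↑G.degTwoSetᶜ : Set V) := hK.subset (coe_subset.2 hWK)
  have hc : ∀ w ∈ G.degTwoSetᶜ, G.otherNbrCount w = #G.degTwoSetᶜ - 1 := by
    intro w hw
    rw [otherNbrCount, ← card_erase_of_mem hw]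
    congr 1
    ext b
    simp only [mem_sdiff, mem_neighborFinset, mem_erase, ← mem_compl]
    exact ⟨fun h => ⟨(G.ne_of_adj h.1).symm, h.2⟩,
      fun h => ⟨hW (mem_coe.2 hw) (mem_coe.2 h.2) h.1.symm, h.2⟩⟩
  rw [sum_congr rfl hc, sum_const, smul_eq_mul]
  have hcard := card_add_card_compl G.degTwoSet
  have hm : #G.degTwoSetᶜ ≤ 3 := (card_le_card hWK).trans hK3
  interval_cases h : #G.degTwoSetᶜ <;> omega

theorem sum_degTwoNbrCount_compl (h2 : TwoConnected G) (htri : EveryEdgeInTriangle G)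
    (hn : 4 ≤ Fintype.card V) :
    ∑ w ∈ G.degTwoSetᶜ, G.degTwoNbrCount w = 2 * #G.degTwoSet := by
  have hinter : ∀ (s : Finset V) (w : V), G.neighborFinset w ∩ s = {b ∈ s | G.Adj w b} := by
    intro s w
    ext b
    simp [and_comm]
  calc ∑ w ∈ G.degTwoSetᶜ, G.degTwoNbrCount w
      = ∑ d ∈ G.degTwoSet, #{w ∈ G.degTwoSetᶜ | G.Adj w d} := by
        simp only [degTwoNbrCount, hinter]
        exact sum_card_bipartiteAbove_eq_sum_card_bipartiteBelow G.Adj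
    _ = ∑ d ∈ G.degTwoSet, 2 := by
        refine sum_congr rfl fun d hd => ?_
        rw [← mem_degTwoSet.1 hd, ← card_neighborFinset_eq_degree]
        congr 1
        ext w
        simp only [mem_filter, mem_compl, mem_neighborFinset, G.adj_comm d]
        exact ⟨And.right,
          fun hw => ⟨fun hwD => not_adj_of_mem_degTwoSet h2 htri hn hwD hd hw, hw⟩⟩
    _ = 2 * #G.degTwoSet := by rw [sum_const, smul_eq_mul, mul_comm]

theorem sum_degree_eq (h2 : TwoConnected G) (htri : EveryEdgeInTriangle G)
    (hn : 4 ≤ Fintype.card V) :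
    ∑ v, G.degree v = 4 * #G.degTwoSet + ∑ w ∈ G.degTwoSetᶜ, G.otherNbrCount w := by
  rw [← sum_add_sum_compl G.degTwoSet, sum_congr rfl fun v hv => mem_degTwoSet.1 hv,
    ← sum_congr rfl fun w _ => degTwoNbrCount_add_otherNbrCount w, sum_add_distrib,
    sum_degTwoNbrCount_compl h2 htri hn, sum_const, smul_eq_mul]
  ring

theorem two_le_otherNbrCount (h2 : TwoConnected G) (htri : EveryEdgeInTriangle G)
    (hn : 4 ≤ Fintype.card V) (hsmall : ¬ G.HasSmallCore) (w : V) :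
    2 ≤ G.otherNbrCount w := by
  by_contra! hc
  obtain ⟨y, hwy, hyD⟩ := exists_adj_notMem_degTwoSet h2 htri hn w
  have hy : y ∈ G.neighborFinset w \ G.degTwoSet := by simp [hwy, hyD]
  have hNw : G.neighborFinset w \ G.degTwoSet = {y} :=
    eq_singleton_iff_unique_mem.2 ⟨hy, fun b hb => card_le_one.1 (by
      unfold otherNbrCount at hc; omega) b hb y hy⟩
  refine hsmall ⟨{y, w}, ?_, ?_, card_le_two.trans (by norm_num)⟩
  · exact compl_degTwoSet_subset_insert h2 htri hn (mem_singleton_self w)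
      (by simpa using (G.ne_of_adj hwy).symm) hyD
      fun s hs => by rw [mem_singleton.1 hs, hNw, singleton_subset_iff]; exact mem_insert_self y _
  · rw [coe_pair, isClique_pair]
    exact fun _ => hwy.symm

theorem Deficient.exists_triangle (h2 : TwoConnected G) (htri : EveryEdgeInTriangle G)
    (hn : 4 ≤ Fintype.card V) {x : V} (hx : G.Deficient x) :
    ∃ v y z, v ∈ G.degTwoSet ∧ G.Adj v x ∧ G.Adj v y ∧
      G.neighborFinset x \ G.degTwoSet = {y, z} ∧ y ≠ z ∧ G.Adj y z := by
  obtain ⟨v, hNxD⟩ := card_eq_one.1 hx.1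
  have hv : v ∈ G.neighborFinset x ∩ G.degTwoSet := hNxD ▸ mem_singleton_self v
  obtain ⟨hxv, hvD⟩ : G.Adj x v ∧ v ∈ G.degTwoSet := by
    rwa [mem_inter, mem_neighborFinset] at hv
  obtain ⟨y, hxy, hNv⟩ := exists_neighborFinset_eq_pair htri (mem_degTwoSet.1 hvD) hxv.symm
  have hvy : G.Adj v y := (G.mem_neighborFinset _ _).1 (by simp [hNv])
  have hy : y ∈ G.neighborFinset x \ G.degTwoSet := by
    simpa [hxy] using fun hyD => not_adj_of_mem_degTwoSet h2 htri hn hvD hyD hvy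
  obtain ⟨z, hz, hzy⟩ := exists_mem_ne (s := G.neighborFinset x \ G.degTwoSet)
    (by rw [← otherNbrCount, hx.2]; norm_num) y
  have hNx : G.neighborFinset x \ G.degTwoSet = {y, z} :=
    (eq_of_subset_of_card_le (by simp [insert_subset_iff, hy, hz])
      (by rw [← otherNbrCount, hx.2, card_pair hzy.symm])).symm
  refine ⟨v, y, z, hvD, hxv.symm, hvy, hNx, hzy.symm, ?_⟩
  obtain ⟨q, hxq, hzq⟩ := htri ((G.mem_neighborFinset _ _).1 (mem_sdiff.1 hz).1)
  by_cases hqD : q ∈ G.degTwoSet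
  · have hqv : q = v := by
      simpa [hNxD] using mem_inter.2 ⟨(G.mem_neighborFinset _ _).2 hxq, hqD⟩
    subst hqv
    have hz' : z ∈ G.neighborFinset q := (G.mem_neighborFinset _ _).2 hzq.symm
    rw [hNv, mem_insert, mem_singleton] at hz'
    rcases hz' with rfl | rfl
    · simp at hz
    · exact absurd rfl hzy
  · have hq : q = y ∨ q = z := by
      simpa [hNx] using mem_sdiff.2 ⟨(G.mem_neighborFinset _ _).2 hxq, hqD⟩
    rcases hq with rfl | rfl
    · exact hzq.symm
    · exact (G.irrefl hzq).elim

/-- Here `v` is the degree-two neighbour of `x` and `y` the other neighbour of `v`. If `y` had only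
two neighbours in the core, then `x`, `y` and the second core neighbour of `x` would form a
triangle containing the whole core. -/
theorem Deficient.exists_discharge (h2 : TwoConnected G) (htri : EveryEdgeInTriangle G)
    (hn : 4 ≤ Fintype.card V) (hsmall : ¬ G.HasSmallCore) {x : V} (hx : G.Deficient x) :
    ∃ y v, (y ∉ G.degTwoSet ∧ 3 ≤ G.otherNbrCount y) ∧
      v ∈ G.neighborFinset y ∩ G.degTwoSet ∧ G.Adj v x := by
  obtain ⟨v, y, z, hvD, hvx, hvy, hNx, hyz, hAyz⟩ := hx.exists_triangle h2 htri hn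
  have hy : y ∈ G.neighborFinset x \ G.degTwoSet := by simp [hNx]
  have hz : z ∈ G.neighborFinset x \ G.degTwoSet := by simp [hNx]
  obtain ⟨hxy, hyD⟩ : G.Adj x y ∧ y ∉ G.degTwoSet := by simpa using hy
  obtain ⟨hxz, hzD⟩ : G.Adj x z ∧ z ∉ G.degTwoSet := by simpa using hz
  refine ⟨y, v, ⟨hyD, ?_⟩, by simp [hvy.symm, hvD], hvx⟩
  by_contra! hc
  have hNy : G.neighborFinset y \ G.degTwoSet = {x, z} :=
    (eq_of_subset_of_card_le
      (by simp [insert_subset_iff, hxy.symm, hAyz, hx.notMem_degTwoSet, hzD])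
      (by rw [← otherNbrCount, card_pair (G.ne_of_adj hxz)]; omega)).symm
  refine hsmall ⟨{z, x, y}, ?_, (is3Clique_triple_iff.2 ⟨hxz.symm, hAyz.symm, hxy⟩).isClique,
    card_le_three⟩
  refine compl_degTwoSet_subset_insert h2 htri hn (mem_insert_self x {y})
    (by simp [(G.ne_of_adj hxz).symm, hyz.symm]) hzD fun s hs => ?_
  rcases mem_insert.1 hs with rfl | hs
  · rw [hNx]
    simp [insert_subset_iff]
  · rw [mem_singleton.1 hs, hNy]
    simp [insert_subset_iff]

theorem card_deficient_le (h2 : TwoConnected G) (htri : EveryEdgeInTriangle G)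
    (hn : 4 ≤ Fintype.card V) (hsmall : ¬ G.HasSmallCore) :
    #{x ∈ G.degTwoSetᶜ | G.Deficient x} ≤
      ∑ y ∈ G.degTwoSetᶜ with 3 ≤ G.otherNbrCount y, G.degTwoNbrCount y := by
  simp only [degTwoNbrCount]
  rw [← card_sigma]
  refine card_le_card_of_forall_subsingleton (fun x p => G.Adj p.2 x) (fun x hx => ?_) ?_
  · obtain ⟨y, v, hy, hv, hvx⟩ := (mem_filter.1 hx).2.exists_discharge h2 htri hn hsmall
    exact ⟨⟨y, v⟩, mem_sigma.2 ⟨by simpa using hy, hv⟩, hvx⟩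
  · rintro ⟨y, v⟩ hp x ⟨hx, hvx⟩ x' ⟨hx', hvx'⟩
    obtain ⟨⟨-, hcy⟩, hvy, hvD⟩ : (y ∉ G.degTwoSet ∧ 3 ≤ G.otherNbrCount y) ∧
        G.Adj y v ∧ G.degree v = 2 := by simpa using hp
    have hxy : ∀ {x}, x ∈ {x ∈ G.degTwoSetᶜ | G.Deficient x} → y ≠ x := by
      rintro x hx rfl
      have := (mem_filter.1 hx).2.2
      omega
    have hx'' : x' ∈ G.neighborFinset v := (G.mem_neighborFinset _ _).2 hvx'
    rw [neighborFinset_eq_pair hvD hvy.symm hvx (hxy hx), mem_insert, mem_singleton] at hx''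
    exact (hx''.resolve_left (hxy hx').symm).symm

theorem six_mul_card_compl_le (hc : ∀ w, 2 ≤ G.otherNbrCount w)
    (hdef : #{x ∈ G.degTwoSetᶜ | G.Deficient x} ≤
      ∑ y ∈ G.degTwoSetᶜ with 3 ≤ G.otherNbrCount y, G.degTwoNbrCount y) :
    6 * #G.degTwoSetᶜ ≤
      ∑ w ∈ G.degTwoSetᶜ, (G.degTwoNbrCount w + 2 * G.otherNbrCount w) := by
  have hpt : ∀ w ∈ G.degTwoSetᶜ,
      6 + (if 3 ≤ G.otherNbrCount w then G.degTwoNbrCount w else 0) ≤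
        G.degTwoNbrCount w + 2 * G.otherNbrCount w + if G.Deficient w then 1 else 0 := by
    intro w hw
    have hdeg : G.degTwoNbrCount w + G.otherNbrCount w ≠ 2 := by
      simpa [degTwoNbrCount_add_otherNbrCount] using hw
    have := hc w
    by_cases hd : G.Deficient w
    · rw [if_pos hd]
      obtain ⟨h1, h2⟩ := hd
      split_ifs <;> omega
    · rw [if_neg hd]
      unfold Deficient at hd
      split_ifs <;> omega
  have := sum_le_sum hpt
  rw [sum_add_distrib, sum_add_distrib, sum_const, smul_eq_mul, sum_ite, sum_const_zero,
    add_zero, sum_boole, Nat.cast_id] at this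
  omega

theorem three_mul_card_compl_le (h2 : TwoConnected G) (htri : EveryEdgeInTriangle G)
    (hn : 6 ≤ Fintype.card V) :
    3 * #G.degTwoSetᶜ ≤ #G.degTwoSet + ∑ w ∈ G.degTwoSetᶜ, G.otherNbrCount w := by
  by_cases hsmall : G.HasSmallCore
  · exact three_mul_card_compl_le_of_hasSmallCore hn hsmall
  have hn4 : 4 ≤ Fintype.card V := by omega
  have h6 := six_mul_card_compl_le (two_le_otherNbrCount h2 htri hn4 hsmall)
    (card_deficient_le h2 htri hn4 hsmall)
  rw [sum_add_distrib, ← mul_sum, sum_degTwoNbrCount_compl h2 htri hn4] at h6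
  omega

theorem three_mul_card_le_sum_degree (h2 : TwoConnected G) (htri : EveryEdgeInTriangle G)
    (hn : 6 ≤ Fintype.card V) : 3 * Fintype.card V ≤ ∑ v, G.degree v := by
  have := three_mul_card_compl_le h2 htri hn
  have := card_add_card_compl G.degTwoSet
  rw [sum_degree_eq h2 htri (by omega)]
  omega

end SimpleGraph

/-- A 2-connected graph of order `n ≥ 6` in which every edge lies in a
triangle has at least `⌈3n/2⌉` edges. -/
theorem stmt_0 {V : Type*} (G : SimpleGraph V)
    (hn : 6 ≤ Nat.card V) (h2 : TwoConnected G) (htri : EveryEdgeInTriangle G) :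
    (3 * Nat.card V + 1) / 2 ≤ numEdges G := by
  have : Finite V := Nat.finite_of_card_ne_zero (by omega)
  have := Fintype.ofFinite V
  classical
  rw [Nat.card_eq_fintype_card] at hn ⊢
  have hsum := G.three_mul_card_le_sum_degree h2 htri hn
  rw [G.sum_degrees_eq_twice_card_edges] at hsum
  rw [numEdges, Nat.card_eq_fintype_card, ← G.edgeFinset_card]
  omega
end

section
/- Let G be a 3-connected simple graph of order n in which every edge lies in a triangle. Then e(G) ≥ 2n − 2. -/
/-! A 3-connected graph has minimum degree at least 3, so `2 e(G) ≥ 3n`, which settles `n = 4`,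
and `2 e(G) ≥ 4n` if no vertex has degree 3. Otherwise induct on `n`: eliminate a vertex `v` of
degree 3, i.e. delete it and make its neighbourhood a clique. Since every edge at `v` lies in a
triangle, the three neighbours of `v` already span at least two edges, so the elimination
removes three edges and adds at most one. The eliminated graph still has every edge in a
triangle, and for `n ≥ 5` it is still 3-connected: removing at most two of its vertices
amounts to contracting an edge at `v` in a connected graph `G - S`. -/

open scoped Finset

namespace SimpleGraph

variable {V W : Type*}

theorem Preconnected.of_surjective_of_adj_reachable {G : SimpleGraph V} {H : SimpleGraph W}
    (hG : G.Preconnected) (f : V → W) (hf : Function.Surjective f)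
    (hadj : ∀ ⦃x y⦄, G.Adj x y → H.Reachable (f x) (f y)) : H.Preconnected := by
  intro a b
  obtain ⟨x, rfl⟩ := hf a
  obtain ⟨y, rfl⟩ := hf b
  simp only [reachable_iff_reflTransGen] at hadj ⊢
  exact Relation.ReflTransGen.lift' f hadj x y ((reachable_iff_reflTransGen x y).1 (hG x y))

theorem ncard_neighborSet_eq_degree (G : SimpleGraph V) (v : V) [Fintype (G.neighborSet v)] :
    (G.neighborSet v).ncard = G.degree v := by
  rw [← Nat.card_coe_set_eq, Nat.card_eq_fintype_card, card_neighborSet_eq_degree]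

theorem numEdges_eq_card_edgeFinset (G : SimpleGraph V) [Fintype G.edgeSet] :
    numEdges G = #G.edgeFinset := by
  rw [numEdges, Nat.card_eq_fintype_card, edgeFinset_card]

theorem card_mul_le_two_mul_numEdges [Finite V] (G : SimpleGraph V) {k : ℕ}
    (h : ∀ v, k ≤ (G.neighborSet v).ncard) : Nat.card V * k ≤ 2 * numEdges G := by
  classical
  have := Fintype.ofFinite V
  rw [numEdges_eq_card_edgeFinset, ← sum_degrees_eq_twice_card_edges, Nat.card_eq_fintype_card,
    ← smul_eq_mul, ← Finset.card_univ, ← Finset.sum_const]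
  exact Finset.sum_le_sum fun v _ => (ncard_neighborSet_eq_degree G v) ▸ h v

theorem numEdges_induce_compl_singleton_add_ncard_neighborSet [Finite V] (G : SimpleGraph V)
    (v : V) : numEdges (G.induce {v}ᶜ) + (G.neighborSet v).ncard = numEdges G := by
  classical
  have := Fintype.ofFinite V
  have hdeg := G.degree_le_card_edgeFinset v
  rw [numEdges_eq_card_edgeFinset, numEdges_eq_card_edgeFinset, ncard_neighborSet_eq_degree,
    card_edgeFinset_induce_compl_singleton, card_edgeFinset_deleteIncidenceSet]
  omega

theorem numEdges_sup_edge_le (G : SimpleGraph V) (b c : V) :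
    numEdges (G ⊔ edge b c) ≤ numEdges G + 1 := by
  simp only [numEdges, Nat.card_coe_set_eq, edgeSet_sup]
  calc (G.edgeSet ∪ (edge b c).edgeSet).ncard
      ≤ G.edgeSet.ncard + (edge b c).edgeSet.ncard := Set.ncard_union_le _ _
    _ ≤ G.edgeSet.ncard + ({s(b, c)} : Set (Sym2 V)).ncard := by
      gcongr
      exacts [Set.toFinite _, edgeSet_edge_subset]
    _ = G.edgeSet.ncard + 1 := by rw [Set.ncard_singleton]

theorem neighborSet_sup_edge_of_ne (G : SimpleGraph V) {v b c : V} (hb : v ≠ b) (hc : v ≠ c) :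
    (G ⊔ edge b c).neighborSet v = G.neighborSet v := by
  ext x
  simp [edge_adj, hb, hc]

def eliminate (G : SimpleGraph V) (v : V) : SimpleGraph ({v}ᶜ : Set V) :=
  (G ⊔ fromRel fun x y => G.Adj v x ∧ G.Adj v y).induce {v}ᶜ

theorem eliminate_adj {G : SimpleGraph V} {v : V} {x y : ({v}ᶜ : Set V)} :
    (G.eliminate v).Adj x y ↔ G.Adj x y ∨ ((x : V) ≠ y ∧ G.Adj v x ∧ G.Adj v y) := by
  simp only [eliminate, comap_adj, Function.Embedding.coe_subtype, sup_adj, fromRel_adj, ne_eq]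
  tauto

end SimpleGraph

open SimpleGraph

section

variable {V : Type*}

theorem ThreeConnected.finite {G : SimpleGraph V} (h : ThreeConnected G) : Finite V :=
  Nat.finite_of_card_ne_zero (by have := h.1; omega)

theorem ThreeConnected.three_le_ncard_neighborSet {G : SimpleGraph V} (h : ThreeConnected G)
    (v : V) : 3 ≤ (G.neighborSet v).ncard := by
  have := h.finite
  by_contra! hlt
  obtain ⟨u, -, hu⟩ := Set.exists_mem_notMem_of_ncard_lt_ncard (s := insert v (G.neighborSet v))
      (t := Set.univ) (by
        have := Set.ncard_insert_le v (G.neighborSet v)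
        have := h.1
        rw [Set.ncard_univ]
        omega)
  rw [Set.mem_insert_iff, not_or] at hu
  obtain ⟨p⟩ := (h.2 _ (by omega)).preconnected ⟨v, by simp⟩ ⟨u, hu.2⟩
  cases p with
  | nil => exact hu.1 rfl
  | @cons _ w _ hadj _ => exact w.2 hadj

theorem ThreeConnected.eliminate {G : SimpleGraph V} (h3 : ThreeConnected G)
    (hV : 5 ≤ Nat.card V) (v : V) : ThreeConnected (G.eliminate v) := by
  classical
  have := h3.finite
  refine ⟨?_, fun S' hS' => ?_⟩
  · rw [Nat.card_coe_set_eq, Set.ncard_compl, Set.ncard_singleton]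
    omega
  set S : Set V := Subtype.val '' S'
  have hS : S.ncard ≤ 2 := by rwa [Set.ncard_image_of_injective _ Subtype.val_injective]
  obtain ⟨a, hva, haS⟩ := Set.exists_mem_notMem_of_ncard_lt_ncard (s := S)
    (t := G.neighborSet v) (by have := h3.three_le_ncard_neighborSet v; omega)
  have hav : a ≠ v := (G.ne_of_adj hva).symm
  have mem_compl : ∀ x (hx : x ≠ v), x ∉ S → (⟨x, hx⟩ : ({v}ᶜ : Set V)) ∈ S'ᶜ :=
    fun x hx hxS hxS' => hxS ⟨_, hxS', rfl⟩
  -- contract the edge `va` of `G - S`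
  let f : (Sᶜ : Set V) → (S'ᶜ : Set ({v}ᶜ : Set V)) := fun x =>
    if hx : x.1 = v then ⟨⟨a, hav⟩, mem_compl a hav haS⟩ else ⟨⟨x, hx⟩, mem_compl x hx x.2⟩
  have hf : ∀ x, ((f x : ({v}ᶜ : Set V)) : V) = if x.1 = v then a else x := by
    intro x
    unfold f
    split_ifs <;> rfl
  have hvS : v ∉ S := by
    rintro ⟨y, -, hy⟩
    exact y.2 hy
  have : Nonempty (S'ᶜ : Set ({v}ᶜ : Set V)) := ⟨f ⟨v, hvS⟩⟩
  refine ⟨Preconnected.of_surjective_of_adj_reachable (h3.2 S hS).preconnected f ?_ ?_⟩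
  · rintro ⟨⟨x, hxv⟩, hx⟩
    have hxS : x ∉ S := by
      rintro ⟨y, hy, rfl⟩
      exact hx hy
    exact ⟨⟨x, hxS⟩, Subtype.ext (Subtype.ext ((hf _).trans (if_neg hxv)))⟩
  · intro x y hxy
    suffices h : (f x : V) = f y ∨ (G.eliminate v).Adj (f x) (f y) by
      rcases h with h | h
      · rw [Subtype.ext (Subtype.ext h)]
      · exact Adj.reachable (G := (G.eliminate v).induce S'ᶜ) h
    have hxy : G.Adj x y := hxy
    rw [eliminate_adj, hf, hf]
    split_ifs with hx hy hy
    · exact absurd (hx.trans hy.symm) (G.ne_of_adj hxy)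
    · rcases eq_or_ne a y with h | h
      · exact .inl h
      · exact .inr (.inr ⟨h, hva, hx ▸ hxy⟩)
    · rcases eq_or_ne (x : V) a with h | h
      · exact .inl h
      · exact .inr (.inr ⟨h, hy ▸ hxy.symm, hva⟩)
    · exact .inr (.inl hxy)

theorem EveryEdgeInTriangle.eliminate {G : SimpleGraph V} (htri : EveryEdgeInTriangle G)
    {v : V} (hv : 3 ≤ (G.neighborSet v).ncard) : EveryEdgeInTriangle (G.eliminate v) := by
  have in_nbhd : ∀ x y : ({v}ᶜ : Set V), G.Adj v x → G.Adj v y →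
      ∃ w, (G.eliminate v).Adj x w ∧ (G.eliminate v).Adj y w := by
    intro x y hx hy
    obtain ⟨t, hvt, ht⟩ := Set.exists_mem_notMem_of_ncard_lt_ncard
      (s := ({(x : V), (y : V)} : Set V)) (t := G.neighborSet v) (by
        have := Set.ncard_insert_le (x : V) {(y : V)}
        rw [Set.ncard_singleton] at this
        omega)
    simp only [Set.mem_insert_iff, Set.mem_singleton_iff, not_or] at ht
    exact ⟨⟨t, (G.ne_of_adj hvt).symm⟩, eliminate_adj.2 (.inr ⟨Ne.symm ht.1, hx, hvt⟩),
      eliminate_adj.2 (.inr ⟨Ne.symm ht.2, hy, hvt⟩)⟩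
  intro x y hxy
  rcases eliminate_adj.1 hxy with hxy | ⟨-, hx, hy⟩
  · obtain ⟨w, hxw, hyw⟩ := htri hxy
    by_cases hw : w = v
    · subst hw
      exact in_nbhd x y hxw.symm hyw.symm
    · exact ⟨⟨w, hw⟩, eliminate_adj.2 (.inl hxw), eliminate_adj.2 (.inl hyw)⟩
  · exact in_nbhd x y hx hy

theorem EveryEdgeInTriangle.exists_adj_adj_of_ncard_neighborSet_eq_three {G : SimpleGraph V}
    (htri : EveryEdgeInTriangle G) {v : V} (hv : (G.neighborSet v).ncard = 3) :
    ∃ a b c, G.neighborSet v = {a, b, c} ∧ b ≠ c ∧ G.Adj a b ∧ G.Adj a c := by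
  obtain ⟨x, y, z, hxy, hxz, hyz, hN⟩ := Set.ncard_eq_three.1 hv
  have nbr : ∀ w ∈ G.neighborSet v, ∃ u ∈ G.neighborSet v, G.Adj w u := fun w hw =>
    let ⟨u, hvu, hwu⟩ := htri hw; ⟨u, hvu, hwu⟩
  simp only [hN, Set.mem_insert_iff, Set.mem_singleton_iff, forall_eq_or_imp, forall_eq,
    exists_eq_or_imp, exists_eq_left, SimpleGraph.irrefl, false_or, or_false] at nbr
  obtain ⟨hx, hy, hz⟩ := nbr
  by_cases hxc : G.Adj x y ∧ G.Adj x z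
  · exact ⟨x, y, z, hN, hyz, hxc⟩
  by_cases hyc : G.Adj y x ∧ G.Adj y z
  · exact ⟨y, x, z, by rw [hN, Set.insert_comm], hxz, hyc⟩
  refine ⟨z, x, y, ?_, hxy, ?_⟩
  · rw [hN, Set.insert_comm, Set.pair_comm, Set.insert_comm, Set.pair_comm]
  · have := G.adj_comm x y
    have := G.adj_comm x z
    have := G.adj_comm y z
    tauto

theorem EveryEdgeInTriangle.numEdges_eliminate_add_two_le [Finite V] {G : SimpleGraph V}
    (htri : EveryEdgeInTriangle G) {v : V} (hv : (G.neighborSet v).ncard = 3) :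
    numEdges (G.eliminate v) + 2 ≤ numEdges G := by
  obtain ⟨a, b, c, hN, hbc, hab, hac⟩ := htri.exists_adj_adj_of_ncard_neighborSet_eq_three hv
  have hnbr : ∀ x, G.Adj v x ↔ x = a ∨ x = b ∨ x = c := fun x => by
    rw [← mem_neighborSet, hN]
    simp only [Set.mem_insert_iff, Set.mem_singleton_iff]
  -- `b c` is the only pair of neighbours of `v` that may be non-adjacent
  have hfill : (G ⊔ fromRel fun x y => G.Adj v x ∧ G.Adj v y) = G ⊔ edge b c := by
    ext x y
    simp only [sup_adj, fromRel_adj, edge_adj, hnbr]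
    have := hab.symm
    have := hac.symm
    grind
  have hvb : v ≠ b := G.ne_of_adj ((hnbr b).2 (.inr (.inl rfl)))
  have hvc : v ≠ c := G.ne_of_adj ((hnbr c).2 (.inr (.inr rfl)))
  have hdel := numEdges_induce_compl_singleton_add_ncard_neighborSet (G ⊔ edge b c) v
  rw [neighborSet_sup_edge_of_ne G hvb hvc, hv] at hdel
  have := numEdges_sup_edge_le G b c
  rw [SimpleGraph.eliminate, hfill]
  omega

end

/-- A 3-connected graph of order `n` in which every edge lies in a triangle
has at least `2n - 2` edges. -/
theorem stmt_3 {V : Type*} (G : SimpleGraph V)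
    (h3 : ThreeConnected G) (htri : EveryEdgeInTriangle G) :
    2 * Nat.card V - 2 ≤ numEdges G := by
  induction hn : Nat.card V using Nat.strong_induction_on generalizing V with
  | _ n ih =>
  have := h3.finite
  have h4 := h3.1
  have hdeg := h3.three_le_ncard_neighborSet
  by_cases hn4 : n = 4
  · have := card_mul_le_two_mul_numEdges G hdeg
    omega
  by_cases hv : ∃ v, (G.neighborSet v).ncard = 3
  · obtain ⟨v, hv⟩ := hv
    have hcard : Nat.card ({v}ᶜ : Set V) = n - 1 := by
      rw [Nat.card_coe_set_eq, Set.ncard_compl, Set.ncard_singleton, hn]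
    have := ih (n - 1) (by omega) (G.eliminate v) (h3.eliminate (by omega) v)
      (htri.eliminate (hdeg v)) hcard
    have := htri.numEdges_eliminate_add_two_le hv
    omega
  · simp only [not_exists] at hv
    have := card_mul_le_two_mul_numEdges G (k := 4) fun v => by
      have := hdeg v
      have := hv v
      omega
    omega
end

section
/- For every integer n ≥ 4, the wheel graph W_n is an edge-pancyclic graph of order n with exactly 2n − 2 edges; consequently, there exists an edge-pancyclic graph of order n with 2n − 2 edges. -/
section WheelAux
open SimpleGraph Walk

variable {m : ℕ}

lemma zmod_natCast_ne_zero (hm : 3 ≤ m) {i : ℕ} (h1 : 0 < i) (h2 : i < m) :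
    (i : ZMod m) ≠ 0 := by
  intro h
  haveI : NeZero m := ⟨by omega⟩
  rw [ZMod.natCast_eq_zero_iff] at h
  have := Nat.le_of_dvd h1 h
  omega

lemma zmod_natCast_inj (hm : 3 ≤ m) {i j : ℕ} (hi : i < m) (hj : j < m)
    (h : (i : ZMod m) = j) : i = j := by
  haveI : NeZero m := ⟨by omega⟩
  have := congrArg ZMod.val h
  rwa [ZMod.val_cast_of_lt hi, ZMod.val_cast_of_lt hj] at this

lemma wheel_adj_hub (a : ZMod m) : (wheelGraph (m+1)).Adj none (some a) := by
  rw [wheelGraph, SimpleGraph.fromRel_adj]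
  exact ⟨by simp, Or.inl trivial⟩

lemma wheel_adj_rim (hm : 3 ≤ m) (a : ZMod m) :
    (wheelGraph (m+1)).Adj (some a) (some (a + 1 : ZMod m)) := by
  rw [wheelGraph, SimpleGraph.fromRel_adj]
  refine ⟨?_, Or.inr rfl⟩
  simp only [ne_eq, Option.some.injEq]
  intro h
  have h1 : (1 : ZMod m) = 0 := by
    have := left_eq_add.mp h
    exact this
  have := zmod_natCast_ne_zero hm (i := 1) (by omega) (by omega)
  simp at this
  exact this h1

lemma wheel_adj_some (hm : 3 ≤ m) {a b : ZMod m}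
    (h : (wheelGraph (m+1)).Adj (some a) (some b)) : a = b + 1 ∨ b = a + 1 := by
  rw [wheelGraph, SimpleGraph.fromRel_adj] at h
  exact h.2

lemma wheel_not_adj_none (h : (wheelGraph (m+1)).Adj (none : Option (ZMod m)) none) :
    False := h.ne rfl

end WheelAux
section AscWalk
open SimpleGraph Walk

variable {m : ℕ}

/-- Walk along the rim from `a` to `a + j` (ascending). -/
def ascWalk (hm : 3 ≤ m) : (j : ℕ) → (a : ZMod m) →
    (wheelGraph (m+1)).Walk (some a) (some (a + (j : ZMod m)))
  | 0, a => Walk.nil.copy rfl (by simp)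
  | j+1, a => (Walk.cons (wheel_adj_rim hm a) (ascWalk hm j (a+1))).copy rfl
      (by congr 1; push_cast; ring_nf)

lemma ascWalk_length (hm : 3 ≤ m) (j : ℕ) (a : ZMod m) :
    (ascWalk hm j a).length = j := by
  induction j generalizing a with
  | zero => simp [ascWalk]
  | succ j ih => simp [ascWalk, ih]

lemma ascWalk_support (hm : 3 ≤ m) (j : ℕ) (a : ZMod m) :
    (ascWalk hm j a).support = (List.range (j+1)).map (fun i : ℕ => some (a + (i : ZMod m))) := by
  induction j generalizing a with
  | zero => simp [ascWalk, List.range_succ]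
  | succ j ih =>
    rw [ascWalk, Walk.support_copy, Walk.support_cons, ih,
      List.range_succ_eq_map (n := j+1), List.map_cons, List.map_map]
    congr 1
    · simp
    · exact List.map_congr_left fun i _ => by
        simp only [Function.comp_apply]; congr 1; push_cast; ring

lemma ascWalk_edges (hm : 3 ≤ m) (j : ℕ) (a : ZMod m) :
    (ascWalk hm j a).edges =
      (List.range j).map (fun i : ℕ => s(some (a + (i : ZMod m)), some (a + (i : ZMod m) + 1))) := by
  induction j generalizing a with
  | zero => simp [ascWalk]
  | succ j ih =>
    rw [ascWalk, Walk.edges_copy, Walk.edges_cons, ih,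
      List.range_succ_eq_map (n := j), List.map_cons, List.map_map]
    congr 1
    · simp
    · exact List.map_congr_left fun i _ => by
        simp only [Function.comp_apply]; congr 2 <;> (push_cast; ring)

end AscWalk
section HubCycle
open SimpleGraph Walk

variable {m : ℕ}

lemma hubCycle_exists (hm : 3 ≤ m) (a : ZMod m) (j : ℕ) (hj1 : 1 ≤ j) (hjm : j < m) :
    ∃ c : (wheelGraph (m+1)).Walk none none, c.IsCycle ∧ c.length = j + 2 ∧
      s((none : Option (ZMod m)), some a) ∈ c.edges ∧
      s(some a, some (a+1 : ZMod m)) ∈ c.edges ∧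
      some a ∈ c.support ∧ some (a+1 : ZMod m) ∈ c.support := by
  haveI : NeZero m := ⟨by omega⟩
  set f : ℕ → Option (ZMod m) := fun i => some (a + (i : ZMod m)) with hf
  have hinj : ∀ i ∈ List.range (j+1), ∀ i' ∈ List.range (j+1), f i = f i' → i = i' := by
    intro i hi i' hi' h
    simp only [hf, Option.some.injEq, add_right_inj] at h
    exact zmod_natCast_inj hm (by simp at hi; omega) (by simp at hi'; omega) h
  have hjz : ((j : ℕ) : ZMod m) ≠ 0 := zmod_natCast_ne_zero hm hj1 hjm
  let q : (wheelGraph (m+1)).Walk (some (a + (j : ZMod m))) none :=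
    Walk.cons (wheel_adj_hub (a + (j : ZMod m))).symm Walk.nil
  let p : (wheelGraph (m+1)).Walk (some a) none := (ascWalk hm j a).append q
  have hps : p.support = (List.range (j+1)).map f ++ [none] := by
    show ((ascWalk hm j a).append q).support = _
    rw [Walk.support_append, ascWalk_support hm j a]
    rfl
  have hpe : p.edges = (List.range j).map
      (fun i : ℕ => s(some (a + (i : ZMod m)), some (a + (i : ZMod m) + 1)))
      ++ [s(some (a + (j : ZMod m)), (none : Option (ZMod m)))] := by
    show ((ascWalk hm j a).append q).edges = _
    rw [Walk.edges_append, ascWalk_edges hm j a]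
    rfl
  have hpath : p.IsPath := by
    rw [Walk.isPath_def, hps, List.nodup_append]
    refine ⟨List.Nodup.map_on hinj List.nodup_range, List.nodup_singleton _, ?_⟩
    intro x hx
    simp only [List.mem_map] at hx
    obtain ⟨i, _, rfl⟩ := hx
    simp [hf]
  have hnotmem : s((none : Option (ZMod m)), some a) ∉ p.edges := by
    rw [hpe]
    simp only [List.mem_append, List.mem_map, List.mem_singleton, List.mem_range]
    rintro (⟨i, _, h⟩ | h)
    · rw [Sym2.eq_iff] at h
      simp at h
    · rw [Sym2.eq_iff] at h
      simp only [Option.some.injEq, and_true, reduceCtorEq, false_and, or_false] at h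
      rcases h with h | ⟨-, h⟩
      · exact h
      · exact hjz (by linear_combination -h)
  refine ⟨Walk.cons (wheel_adj_hub a) p, ?_, ?_, ?_, ?_, ?_, ?_⟩
  · exact (Walk.cons_isCycle_iff p (wheel_adj_hub a)).mpr ⟨hpath, hnotmem⟩
  · show p.length + 1 = j + 2
    show ((ascWalk hm j a).append q).length + 1 = j + 2
    rw [Walk.length_append, ascWalk_length]
    rfl
  · rw [Walk.edges_cons]
    exact List.mem_cons_self
  · rw [Walk.edges_cons]
    apply List.mem_cons_of_mem
    rw [hpe]
    apply List.mem_append_left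
    refine List.mem_map.mpr ⟨0, List.mem_range.mpr (by omega), ?_⟩
    norm_num
  · rw [Walk.support_cons]
    apply List.mem_cons_of_mem
    rw [hps]
    apply List.mem_append_left
    exact List.mem_map.mpr ⟨0, List.mem_range.mpr (by omega), by simp [hf]⟩
  · rw [Walk.support_cons]
    apply List.mem_cons_of_mem
    rw [hps]
    apply List.mem_append_left
    exact List.mem_map.mpr ⟨1, List.mem_range.mpr (by omega), by simp [hf]⟩

end HubCycle
section Pancyclic
open SimpleGraph Walk

variable {m : ℕ}

lemma card_option_zmod (hm : 3 ≤ m) : Nat.card (Option (ZMod m)) = m + 1 := by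
  haveI : NeZero m := ⟨by omega⟩
  simp [Nat.card_eq_fintype_card, ZMod.card]

lemma rotate_length {V : Type*} [DecidableEq V] {G : SimpleGraph V} {u v : V} (c : G.Walk v v)
    (h : u ∈ c.support) : (c.rotate u h).length = c.length := by
  rw [← Walk.length_edges, ← Walk.length_edges]
  exact (Walk.rotate_edges c u h).perm.length_eq

lemma wheel_edgePancyclic (hm : 3 ≤ m) : EdgePancyclic (wheelGraph (m+1)) := by
  intro k hk3 hkcard u v huv
  have hkcard' : k ≤ m + 1 := hkcard.trans (le_of_eq (card_option_zmod hm))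
  set j := k - 2 with hj
  have hj1 : 1 ≤ j := by omega
  have hjm : j < m := by omega
  have hk : j + 2 = k := by omega
  match u, v with
  | none, none => exact (huv.ne rfl).elim
  | none, some a =>
    obtain ⟨c, hc, hlen, he1, _, _, _⟩ := hubCycle_exists hm a j hj1 hjm
    exact ⟨c, hc, by omega, he1⟩
  | some a, none =>
    obtain ⟨c, hc, hlen, he1, _, hs1, _⟩ := hubCycle_exists hm a j hj1 hjm
    refine ⟨c.rotate _ hs1, hc.rotate hs1, by rw [rotate_length]; omega, ?_⟩
    rw [(Walk.rotate_edges c _ hs1).mem_iff, Sym2.eq_swap]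
    exact he1
  | some a, some b =>
    rcases wheel_adj_some hm huv with h | h
    · obtain ⟨c, hc, hlen, _, he2, _, hs2⟩ := hubCycle_exists hm b j hj1 hjm
      have hs2' : some a ∈ c.support := h ▸ hs2
      refine ⟨c.rotate _ hs2', hc.rotate hs2', by rw [rotate_length]; omega, ?_⟩
      rw [(Walk.rotate_edges c _ hs2').mem_iff, h, Sym2.eq_swap]
      exact he2
    · obtain ⟨c, hc, hlen, _, he2, hs1, _⟩ := hubCycle_exists hm a j hj1 hjm
      refine ⟨c.rotate _ hs1, hc.rotate hs1, by rw [rotate_length]; omega, ?_⟩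
      rw [(Walk.rotate_edges c _ hs1).mem_iff, h]
      exact he2

end Pancyclic
section EdgeCount
open SimpleGraph

variable {m : ℕ}

lemma wheel_numEdges (hm : 3 ≤ m) : numEdges (wheelGraph (m+1)) = 2 * m := by
  haveI : NeZero m := ⟨by omega⟩
  have h2 : ((2 : ℕ) : ZMod m) ≠ 0 := zmod_natCast_ne_zero hm (by omega) (by omega)
  let f : ZMod m ⊕ ZMod m → (wheelGraph (m+1)).edgeSet := fun x =>
    match x with
    | Sum.inl a => ⟨s(some a, some (a+1 : ZMod m)), (wheelGraph (m+1)).mem_edgeSet.mpr (wheel_adj_rim hm a)⟩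
    | Sum.inr a => ⟨s(none, some a), (wheelGraph (m+1)).mem_edgeSet.mpr (wheel_adj_hub a)⟩
  have hbij : Function.Bijective f := by
    constructor
    · rintro (a | a) (b | b) h
      · simp only [f, Subtype.mk.injEq, Sym2.eq_iff, Option.some.injEq, reduceCtorEq,
          false_and, and_false, or_false, false_or] at h
        rcases h with ⟨h, -⟩ | ⟨h1, h2'⟩
        · rw [h]
        · exact absurd (by push_cast; linear_combination h2' - h1) h2
      · exfalso; simp [f, Sym2.eq_iff] at h
      · exfalso; simp [f, Sym2.eq_iff] at h
      · simp only [f, Subtype.mk.injEq, Sym2.eq_iff, Option.some.injEq, reduceCtorEq,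
          false_and, and_false, or_false, false_or, true_and, and_true] at h
        rw [h]
    · rintro ⟨e, he⟩
      induction e using Sym2.ind with
      | _ x y =>
        rw [SimpleGraph.mem_edgeSet] at he
        match x, y with
        | none, none => exact (he.ne rfl).elim
        | none, some a => exact ⟨Sum.inr a, rfl⟩
        | some a, none => exact ⟨Sum.inr a, Subtype.ext Sym2.eq_swap⟩
        | some a, some b =>
          rcases wheel_adj_some hm he with h | h
          · exact ⟨Sum.inl b, Subtype.ext (by simp only [f]; rw [← h]; exact Sym2.eq_swap)⟩
          · exact ⟨Sum.inl a, Subtype.ext (by simp only [f]; rw [← h])⟩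
  have := Nat.card_congr (Equiv.ofBijective f hbij)
  rw [numEdges, ← this, Nat.card_sum, Nat.card_zmod]
  ring

end EdgeCount
section Transfer
open SimpleGraph Walk

lemma edgePancyclic_of_iso {V W : Type*} {G : SimpleGraph V} {G' : SimpleGraph W}
    (e : G ≃g G') (h : EdgePancyclic G) : EdgePancyclic G' := by
  intro k hk3 hkcard u v huv
  have hcard : Nat.card V = Nat.card W := Nat.card_congr e.toEquiv
  have huv' : G.Adj (e.symm u) (e.symm v) := e.symm.map_adj_iff.mpr huv
  obtain ⟨c, hc, hlen, hmem⟩ := h k hk3 (by omega) huv'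
  have hinj : Function.Injective (e.toHom : V → W) := e.toEquiv.injective
  refine ⟨(c.map e.toHom).copy (by simp) (by simp), ?_, ?_, ?_⟩
  · rw [Walk.isCycle_copy]
    exact hc.map hinj
  · rw [Walk.length_copy, Walk.length_map]
    exact hlen
  · rw [Walk.edges_copy, Walk.edges_map]
    refine List.mem_map.mpr ⟨s(e.symm u, e.symm v), hmem, ?_⟩
    simp [Sym2.map_pair_eq]

lemma numEdges_of_iso {V W : Type*} {G : SimpleGraph V} {G' : SimpleGraph W}
    (e : G ≃g G') : numEdges G = numEdges G' :=
  Nat.card_congr e.mapEdgeSet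

end Transfer
/-- For every `n ≥ 4`, the wheel graph `W_n` is an edge-pancyclic graph of
order `n` with exactly `2n - 2` edges; consequently there exists an edge-pancyclic graph
of order `n` with `2n - 2` edges. -/
theorem stmt_7 (n : ℕ) (hn : 4 ≤ n) :
    (Nat.card (Option (ZMod (n - 1))) = n ∧ EdgePancyclic (wheelGraph n) ∧
      numEdges (wheelGraph n) = 2 * n - 2) ∧
    ∃ G : SimpleGraph (Fin n), EdgePancyclic G ∧ numEdges G = 2 * n - 2 := by
  obtain ⟨m, rfl⟩ : ∃ m, n = m + 1 := ⟨n - 1, by omega⟩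
  have hm : 3 ≤ m := by omega
  haveI : NeZero m := ⟨by omega⟩
  have hcard : Nat.card (Option (ZMod m)) = m + 1 := card_option_zmod hm
  have hpan : EdgePancyclic (wheelGraph (m+1)) := wheel_edgePancyclic hm
  have hnum : numEdges (wheelGraph (m+1)) = 2 * m := wheel_numEdges hm
  refine ⟨⟨hcard, hpan, by rw [hnum]; omega⟩, ?_⟩
  have hfc : Fintype.card (Option (ZMod m)) = m + 1 := by simp [ZMod.card]
  let e : Option (ZMod m) ≃ Fin (m + 1) :=
    Fintype.equivFinOfCardEq hfc
  refine ⟨(wheelGraph (m+1)).map e.toEmbedding, ?_, ?_⟩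
  · exact edgePancyclic_of_iso (SimpleGraph.Iso.map e _) hpan
  · rw [show numEdges ((wheelGraph (m+1)).map e.toEmbedding) = numEdges (wheelGraph (m+1)) from
      (numEdges_of_iso (SimpleGraph.Iso.map e _)).symm, hnum]
    omega
end

section
/- Every connected edge-pancyclic simple graph of order n ≥ 3 has diameter at most ⌊2n/5⌋. -/
/-
Let `x, y` realise the diameter `d` and sort the vertices into the levels `L ℓ` of their
distance from `x`. A Hamiltonian cycle through an edge `wz` runs from `x` to `y` and back, so
each of its two arcs meets every inner level `L ℓ` (`0 < ℓ < d`), and the arc avoiding `wz`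
does so off `wz`. Hence inner levels have at least two vertices, and at least three if they
contain an edge. Every edge of a shortest `x`–`y` path lies in a triangle, whose apex creates
such an edge in one of the two levels of the path edge. So consecutive inner levels hold at
least five vertices together, the two end pairs at least four, and summing gives `5 d ≤ 2 n`.
-/

open Finset

lemma five_mul_le_two_mul_sum {d : ℕ} (c : ℕ → ℕ) (h0 : 1 ≤ c 0) (hd : 1 ≤ c d)
    (hmid : ∀ j, 0 < j → j < d → 2 ≤ c j)
    (hpair : ∀ j < d, 3 ≤ c j ∨ 3 ≤ c (j + 1) ∨ (j + 1 = d ∧ 2 ≤ c (j + 1))) :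
    5 * d ≤ 2 * ∑ j ∈ range (d + 1), c j := by
  -- The indicators pay for the first and the last pair, which need only hold four.
  have hterm : ∀ j ∈ range d,
      5 ≤ c j + c (j + 1) + (if j = 0 then 1 else 0) + (if j = d - 1 then 1 else 0) := by
    intro j hj
    rw [mem_range] at hj
    have := hpair j hj
    have hfirst : 2 ≤ c j ∨ j = 0 :=
      (Nat.eq_zero_or_pos j).elim .inr fun h => .inl (hmid j h hj)
    have hlast : 2 ≤ c (j + 1) ∨ j + 1 = d :=
      (Nat.lt_or_ge (j + 1) d).elim (fun h => .inl (hmid _ j.succ_pos h)) fun h => .inr (by omega)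
    rcases hfirst with h | rfl <;> rcases hlast with h' | rfl <;> split_ifs <;> omega
  have hsum := sum_le_sum hterm
  simp only [sum_add_distrib, sum_ite_eq', mem_range, sum_const, card_range, smul_eq_mul] at hsum
  have h1 := sum_range_succ c d
  have h2 := sum_range_succ' c d
  split_ifs at hsum <;> omega

namespace SimpleGraph

variable {V : Type*} {G : SimpleGraph V}

lemma Adj.dist_le_dist_add_one {v w : V} (h : G.Adj v w) (x : V) :
    G.dist x w ≤ G.dist x v + 1 := by
  rcases h.diff_dist_adj (u := x) with h | h | h <;> omega

lemma card_eq_sum_card_dist_eq [Fintype V] (x : V) {d : ℕ}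
    (h : ∀ v, G.dist x v ≤ d) :
    Fintype.card V = ∑ j ∈ range (d + 1), #{v | G.dist x v = j} := by
  rw [← card_univ]
  exact card_eq_sum_card_fiberwise fun v _ => mem_range.mpr (Nat.lt_succ_of_le (h v))

namespace Walk

lemma exists_mem_support_eq_of_le_of_le {f : V → ℕ}
    (hf : ∀ ⦃v w⦄, G.Adj v w → f w ≤ f v + 1) {ℓ : ℕ} {a b : V} (p : G.Walk a b)
    (ha : f a ≤ ℓ) (hb : ℓ ≤ f b) : ∃ v ∈ p.support, f v = ℓ := by
  induction p with
  | nil => exact ⟨_, List.mem_singleton_self _, le_antisymm ha hb⟩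
  | cons h p ih =>
    rcases ha.eq_or_lt with ha | ha
    · exact ⟨_, start_mem_support _, ha⟩
    · obtain ⟨v, hv, hfv⟩ := ih (by have := hf h; omega) hb
      exact ⟨v, List.mem_cons_of_mem _ hv, hfv⟩

lemma dist_getVert_of_length_eq_dist {u v : V} (p : G.Walk u v)
    (hp : p.length = G.dist u v) {j : ℕ} (hj : j ≤ p.length) :
    G.dist u (p.getVert j) = j := by
  have hpre : G.dist u (p.getVert j) ≤ j := by
    simpa [hj] using dist_le (p.take j)
  have hsuf : G.dist (p.getVert j) v ≤ p.length - j := by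
    simpa using dist_le (p.drop j)
  have := (p.drop j).reachable.dist_triangle_right u
  omega

lemma IsCycle.ne_of_mem_support_append {a b v w : V} {p : G.Walk a b} {q : G.Walk b a}
    (hc : (p.append q).IsCycle) (hv : v ∈ p.support) (hva : v ≠ a)
    (hw : w ∈ q.support) (hwb : w ≠ b) : v ≠ w := by
  have hnd := hc.support_nodup
  rw [support_append, ← p.cons_tail_support, List.cons_append, List.tail_cons,
    List.nodup_append] at hnd
  rw [← p.cons_tail_support, List.mem_cons] at hv
  rw [← q.cons_tail_support, List.mem_cons] at hw
  exact hnd.2.2 v (hv.resolve_left hva) w (hw.resolve_left hwb)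

variable [DecidableEq V]

lemma IsCycle.exists_ne_of_mem_edges {a b w z : V} {c : G.Walk a a} (hc : c.IsCycle)
    {f : V → ℕ} (hf : ∀ ⦃v w⦄, G.Adj v w → f w ≤ f v + 1) {ℓ : ℕ}
    (hb : b ∈ c.support) (haℓ : f a < ℓ) (hbℓ : ℓ < f b) (he : s(w, z) ∈ c.edges) :
    ∃ v, f v = ℓ ∧ v ≠ w ∧ v ≠ z := by
  rw [← c.take_spec hb] at hc he
  set p := c.takeUntil b hb
  set q := c.dropUntil b hb
  have hcommon : ∀ x ∈ p.support, x ∈ q.support → f x ≠ ℓ := fun x hxp hxq hfx =>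
    hc.ne_of_mem_support_append hxp (by rintro rfl; omega) hxq (by rintro rfl; omega) rfl
  obtain ⟨v, hvp, hv⟩ := p.exists_mem_support_eq_of_le_of_le hf haℓ.le hbℓ.le
  obtain ⟨v', hvq, hv'⟩ := q.reverse.exists_mem_support_eq_of_le_of_le hf haℓ.le hbℓ.le
  rw [support_reverse, List.mem_reverse] at hvq
  rw [edges_append, List.mem_append] at he
  rcases he with he | he
  · refine ⟨v', hv', fun h => ?_, fun h => ?_⟩ <;> subst h
    · exact hcommon _ (p.fst_mem_support_of_mem_edges he) hvq hv'
    · exact hcommon _ (p.snd_mem_support_of_mem_edges he) hvq hv'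
  · refine ⟨v, hv, fun h => ?_, fun h => ?_⟩ <;> subst h
    · exact hcommon _ hvp (q.fst_mem_support_of_mem_edges he) hv
    · exact hcommon _ hvp (q.snd_mem_support_of_mem_edges he) hv

end Walk

end SimpleGraph

open SimpleGraph

section EdgePancyclic

variable {V : Type*} {G : SimpleGraph V}

lemma EdgePancyclic.everyEdgeInTriangle (hep : EdgePancyclic G) (hn : 3 ≤ Nat.card V) :
    EveryEdgeInTriangle G := by
  intro u v huv
  obtain ⟨c, -, hlen, he⟩ := hep 3 le_rfl hn huv
  match c, hlen with
  | .cons (v := a) h₁ (.cons (v := b) h₂ (.cons h₃ .nil)), _ =>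
    have hv : v = a ∨ v = b := by
      simp only [Walk.edges_cons, Walk.edges_nil, List.mem_cons, Sym2.eq_iff,
        List.not_mem_nil, or_false] at he
      grind [h₁.ne, h₃.ne]
    rcases hv with rfl | rfl
    · exact ⟨b, h₃.symm, h₂⟩
    · exact ⟨a, h₁, h₂.symm⟩

variable [Fintype V] [DecidableEq V]

lemma EdgePancyclic.exists_ne_of_adj (hep : EdgePancyclic G) (hn : 3 ≤ Nat.card V)
    {f : V → ℕ} (hf : ∀ ⦃v w⦄, G.Adj v w → f w ≤ f v + 1) {ℓ : ℕ} {a b w z : V}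
    (hwz : G.Adj w z) (haℓ : f a < ℓ) (hbℓ : ℓ < f b) :
    ∃ v, f v = ℓ ∧ v ≠ w ∧ v ≠ z := by
  obtain ⟨c, hc, hlen, he⟩ := hep _ hn le_rfl hwz
  have hham : c.IsHamiltonianCycle := Walk.isHamiltonianCycle_iff_isCycle_and_length_eq.mpr
    ⟨hc, by rwa [Nat.card_eq_fintype_card] at hlen⟩
  have hrot := hham.rotate (hham.mem_support a)
  exact hrot.isCycle.exists_ne_of_mem_edges hf (hrot.mem_support b) haℓ hbℓ
    ((c.rotate_edges a _).mem_iff.mpr he)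

lemma EdgePancyclic.two_le_card_dist_eq (hep : EdgePancyclic G) (hn : 3 ≤ Nat.card V)
    {x a b w z : V} {ℓ : ℕ} (hwz : G.Adj w z) (hw : G.dist x w = ℓ)
    (ha : G.dist x a < ℓ) (hb : ℓ < G.dist x b) :
    2 ≤ #{v | G.dist x v = ℓ} := by
  obtain ⟨v, hv, hvw, -⟩ :=
    hep.exists_ne_of_adj hn (fun _ _ h => h.dist_le_dist_add_one x) hwz ha hb
  exact one_lt_card.mpr ⟨v, by simpa, w, by simpa, hvw⟩

lemma EdgePancyclic.three_le_card_dist_eq (hep : EdgePancyclic G) (hn : 3 ≤ Nat.card V)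
    {x a b w z : V} {ℓ : ℕ} (hwz : G.Adj w z) (hw : G.dist x w = ℓ) (hz : G.dist x z = ℓ)
    (ha : G.dist x a < ℓ) (hb : ℓ < G.dist x b) :
    3 ≤ #{v | G.dist x v = ℓ} := by
  obtain ⟨v, hv, hvw, hvz⟩ :=
    hep.exists_ne_of_adj hn (fun _ _ h => h.dist_le_dist_add_one x) hwz ha hb
  exact two_lt_card.mpr ⟨v, by simpa, w, by simpa, z, by simpa, hvw, hvz, hwz.ne⟩

lemma EdgePancyclic.three_le_card_dist_eq_or (hep : EdgePancyclic G) (hn : 3 ≤ Nat.card V)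
    (hconn : G.Connected) {x y u v : V} {j : ℕ} (huv : G.Adj u v) (hu : G.dist x u = j)
    (hv : G.dist x v = j + 1) (hy : j < G.dist x y) :
    3 ≤ #{w | G.dist x w = j} ∨ 3 ≤ #{w | G.dist x w = j + 1} ∨
      (j + 1 = G.dist x y ∧ 2 ≤ #{w | G.dist x w = j + 1}) := by
  obtain ⟨t, hut, hvt⟩ := hep.everyEdgeInTriangle hn huv
  have := hut.dist_le_dist_add_one x
  have := hvt.symm.dist_le_dist_add_one x
  obtain ht | ht : G.dist x t = j ∨ G.dist x t = j + 1 := by omega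
  · have hj : 0 < j := by
      refine Nat.pos_of_ne_zero fun hj => hut.ne ?_
      rw [hj, hconn.dist_eq_zero_iff] at hu ht
      exact hu.symm.trans ht
    exact .inl <| hep.three_le_card_dist_eq hn hut hu ht (a := x) (by simpa) hy
  · rcases (j + 1).lt_or_ge (G.dist x y) with hjy | hjy
    · exact .inr <| .inl <| hep.three_le_card_dist_eq hn hvt hv ht (a := x) (by simp) hjy
    · exact .inr <| .inr ⟨by omega, one_lt_card.mpr ⟨v, by simpa, t, by simpa, hvt.ne⟩⟩

end EdgePancyclic

/-- Every connected edge-pancyclic graph of order `n ≥ 3` has diameter at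
most `⌊2n/5⌋`. -/
theorem stmt_10 {V : Type*} (G : SimpleGraph V)
    (hn : 3 ≤ Nat.card V) (hconn : G.Connected) (hep : EdgePancyclic G) :
    G.diam ≤ 2 * Nat.card V / 5 := by
  classical
  have : Finite V := Nat.finite_of_card_ne_zero (by omega)
  cases nonempty_fintype V
  rw [Nat.le_div_iff_mul_le (by norm_num)]
  have := hconn.nonempty
  obtain ⟨x, y, hxy⟩ := G.exists_dist_eq_diam
  obtain ⟨p, hp⟩ := hconn.exists_walk_length_eq_dist x y
  have hgeo : ∀ j ≤ G.diam, G.dist x (p.getVert j) = j := fun j hj =>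
    p.dist_getVert_of_length_eq_dist hp (by omega)
  have hadj : ∀ j < G.diam, G.Adj (p.getVert j) (p.getVert (j + 1)) := fun j hj =>
    p.adj_getVert_succ (by omega)
  rw [Nat.card_eq_fintype_card,
    card_eq_sum_card_dist_eq x fun v => dist_le_diam (connected_iff_ediam_ne_top.mp hconn)]
  refine mul_comm G.diam 5 ▸ five_mul_le_two_mul_sum _ ?_ ?_ ?_ ?_
  · exact card_pos.mpr ⟨x, by simp⟩
  · exact card_pos.mpr ⟨y, by simpa⟩
  · exact fun j hj0 hjd => hep.two_le_card_dist_eq hn (hadj j hjd) (hgeo j hjd.le)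
      (a := x) (by simpa) (b := y) (by omega)
  · exact fun j hjd => hxy ▸ hep.three_le_card_dist_eq_or hn hconn (hadj j hjd)
      (hgeo j hjd.le) (hgeo (j + 1) hjd) (by omega)
end

section
/- If H is a Hamiltonian simple graph of order n ≥ 6 with minimum degree δ(H) ≥ 3, then the diameter of H is at most ⌊n/2⌋ − 1. -/
/-!
Enumerate a Hamiltonian cycle as `f : ZMod n → V`; walking along it gives
`d(f a, f (a + k)) ≤ k`, so only vertices at cyclic distance `m = ⌊n/2⌋` need a shortcut. Since
`deg (f a) ≥ 3` there is a chord `f a ~ f (a + s)` with `2 ≤ s ≤ n - 2`, and it reaches `f (a + m)`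
in at most `m - 1` steps unless `n = 2m + 1` and `s = n - 2`. In that last case a chord at
`f (a + m)` gives the shortcut instead.
-/

namespace SimpleGraph

variable {V : Type*} {G : SimpleGraph V}

namespace Walk

lemma getVert_mod_length {a : V} (p : G.Walk a a) {k : ℕ} (hk : k ≤ p.length) :
    p.getVert (k % p.length) = p.getVert k := by
  rcases hk.lt_or_eq with hk | rfl
  · rw [Nat.mod_eq_of_lt hk]
  · rw [Nat.mod_self, getVert_zero, getVert_length]

lemma adj_getVert_val_add_one {a : V} (p : G.Walk a a) [NeZero p.length]
    (i : ZMod p.length) : G.Adj (p.getVert i.val) (p.getVert (i + 1).val) := by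
  have hi := i.val_lt
  have hsucc : (i + 1).val = (i.val + 1) % p.length := by
    rw [← ZMod.val_natCast, Nat.cast_add_one, ZMod.natCast_zmod_val]
  rw [hsucc, p.getVert_mod_length hi]
  exact p.adj_getVert_succ hi

end Walk

lemma IsHamiltonian.exists_surjective_adj_add_one [Fintype V] [DecidableEq V]
    (hG : G.IsHamiltonian) (hV : Fintype.card V ≠ 1) :
    ∃ f : ZMod (Fintype.card V) → V, (∀ i, G.Adj (f i) (f (i + 1))) ∧ f.Surjective := by
  obtain ⟨a, p, hp⟩ := hG hV
  rw [← hp.length_eq]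
  have : NeZero p.length := ⟨(Nat.zero_lt_of_lt hp.isCycle.three_le_length).ne'⟩
  refine ⟨fun i => p.getVert i.val, p.adj_getVert_val_add_one, fun v => ?_⟩
  obtain ⟨k, rfl, hk⟩ := Walk.mem_support_iff_exists_getVert.mp (hp.mem_support v)
  exact ⟨k, by simp only [ZMod.val_natCast, p.getVert_mod_length hk]⟩

section CyclicEnumeration

variable {R : Type*} [AddMonoidWithOne R] {f : R → V}

lemma edist_le_of_adj_add_one (hf : ∀ i, G.Adj (f i) (f (i + 1))) (a : R) (k : ℕ) :
    G.edist (f a) (f (a + k)) ≤ k := by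
  induction k with
  | zero => simp
  | succ k ih =>
    calc G.edist (f a) (f (a + ↑(k + 1)))
        ≤ G.edist (f a) (f (a + k)) + G.edist (f (a + k)) (f (a + k + 1)) := by
          rw [Nat.cast_succ, ← add_assoc]; exact G.edist_triangle
      _ ≤ k + 1 := by rw [edist_eq_one_iff_adj.mpr (hf _)]; gcongr
      _ = ↑(k + 1) := by push_cast; rfl

lemma edist_add_le_sub_of_adj_add_one (hf : ∀ i, G.Adj (f i) (f (i + 1))) (a : R) {i j : ℕ}
    (hij : i ≤ j) : G.edist (f (a + i)) (f (a + j)) ≤ (j - i : ℕ) := by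
  simpa only [add_assoc, ← Nat.cast_add, Nat.add_sub_cancel' hij]
    using edist_le_of_adj_add_one hf (a + i) (j - i)

end CyclicEnumeration

section ZModEnumeration

variable {n : ℕ} [NeZero n] {f : ZMod n → V}

lemma exists_adj_add_of_three_le_degree (hsurj : f.Surjective) (a : ZMod n)
    [Fintype (G.neighborSet (f a))] (hdeg : 3 ≤ G.degree (f a)) :
    ∃ s : ℕ, 2 ≤ s ∧ s + 2 ≤ n ∧ G.Adj (f a) (f (a + s)) := by
  classical
  have hcard : ({f (a + 1), f (a - 1)} : Finset V).card < (G.neighborFinset (f a)).card :=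
    Finset.card_le_two.trans_lt hdeg
  obtain ⟨w, hw, hw'⟩ := Finset.exists_mem_notMem_of_card_lt_card hcard
  obtain ⟨x, rfl⟩ := hsurj w
  rw [mem_neighborFinset] at hw
  simp only [Finset.mem_insert, Finset.mem_singleton, not_or] at hw'
  have hval : (((x - a).val : ℕ) : ZMod n) = x - a := ZMod.natCast_zmod_val _
  have h0 : (x - a).val ≠ 0 := by
    rw [Ne, ZMod.val_eq_zero, sub_eq_zero]; exact fun h => hw.ne' (congrArg f h)
  have h1 : (x - a).val ≠ 1 := by
    intro h
    rw [h, Nat.cast_one] at hval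
    exact hw'.1 (congrArg f (by linear_combination -hval))
  have hn1 : (x - a).val ≠ n - 1 := by
    intro h
    rw [h, Nat.cast_pred (Nat.pos_of_neZero n), ZMod.natCast_self] at hval
    exact hw'.2 (congrArg f (by linear_combination -hval))
  refine ⟨(x - a).val, by omega, by have := (x - a).val_lt; omega, ?_⟩
  rwa [hval, add_sub_cancel]

lemma edist_add_le_of_adj_add_sub_two {m : ℕ} (hn : n = 2 * m + 1) (hm : 3 ≤ m)
    (hf : ∀ i, G.Adj (f i) (f (i + 1))) (hsurj : f.Surjective) (a : ZMod n)
    [Fintype (G.neighborSet (f (a + m)))] (hdeg : 3 ≤ G.degree (f (a + m)))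
    (hadj : G.Adj (f a) (f (a + (n - 2 : ℕ)))) :
    G.edist (f a) (f (a + m)) ≤ (m - 1 : ℕ) := by
  obtain ⟨s, hs2, hsn, hadj'⟩ := exists_adj_add_of_three_le_degree hsurj (a + m) hdeg
  have hback {p : ℕ} (h : a + m + s = a + p) : G.edist (f (a + p)) (f (a + m)) ≤ 1 :=
    (edist_eq_one_iff_adj.mpr (h ▸ hadj'.symm)).le
  rcases lt_or_ge (m + s) n with hp | hp
  · have hpos := hback (p := m + s) (by rw [add_assoc, Nat.cast_add])
    rcases (show m + s ≤ n - 1 by omega).lt_or_eq with hp' | hp'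
    · calc G.edist (f a) (f (a + m))
          ≤ G.edist (f a) (f (a + (n - 2 : ℕ)))
            + G.edist (f (a + (n - 2 : ℕ))) (f (a + ↑(m + s)))
            + G.edist (f (a + ↑(m + s))) (f (a + m)) :=
            G.edist_triangle.trans (add_le_add_left G.edist_triangle _)
        _ ≤ 1 + (n - 2 - (m + s) : ℕ) + 1 := by
            gcongr
            · exact (edist_eq_one_iff_adj.mpr hadj).le
            · rw [edist_comm]; exact edist_add_le_sub_of_adj_add_one hf a (by omega)
        _ ≤ (m - 1 : ℕ) := by norm_cast; omega
    · have hlast : G.Adj (f a) (f (a + (n - 1 : ℕ))) := by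
        have := hf (a + (n - 1 : ℕ))
        rwa [add_assoc, ← Nat.cast_add_one, Nat.sub_add_cancel (by omega), ZMod.natCast_self,
          add_zero, adj_comm] at this
      calc G.edist (f a) (f (a + m))
          ≤ G.edist (f a) (f (a + (n - 1 : ℕ))) + G.edist (f (a + (n - 1 : ℕ))) (f (a + m)) :=
            G.edist_triangle
        _ ≤ 1 + 1 := by
            gcongr
            · exact (edist_eq_one_iff_adj.mpr hlast).le
            · rw [← hp']; exact hpos
        _ ≤ (m - 1 : ℕ) := by norm_cast; omega
  · have hpos := hback (p := m + s - n) (by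
      rw [add_assoc, ← Nat.cast_add, Nat.cast_sub hp, ZMod.natCast_self, sub_zero])
    calc G.edist (f a) (f (a + m))
        ≤ G.edist (f a) (f (a + ↑(m + s - n))) + G.edist (f (a + ↑(m + s - n))) (f (a + m)) :=
          G.edist_triangle
      _ ≤ (m + s - n : ℕ) + 1 := by
          gcongr
          simpa using edist_le_of_adj_add_one hf a (m + s - n)
      _ ≤ (m - 1 : ℕ) := by norm_cast; omega

lemma edist_add_le_of_le_half [G.LocallyFinite] (hn : 6 ≤ n)
    (hf : ∀ i, G.Adj (f i) (f (i + 1))) (hsurj : f.Surjective) (hdeg : ∀ v, 3 ≤ G.degree v)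
    (a : ZMod n) {t : ℕ} (ht : t ≤ n / 2) :
    G.edist (f a) (f (a + t)) ≤ (n / 2 - 1 : ℕ) := by
  rcases ht.lt_or_eq with ht | rfl
  · exact (edist_le_of_adj_add_one hf a t).trans (by norm_cast; omega)
  obtain ⟨s, hs2, hsn, hadj⟩ := exists_adj_add_of_three_le_degree hsurj a (hdeg _)
  have hchord : G.edist (f a) (f (a + s)) ≤ 1 := (edist_eq_one_iff_adj.mpr hadj).le
  by_cases hsm : s ≤ n / 2
  · calc G.edist (f a) (f (a + ↑(n / 2)))
        ≤ G.edist (f a) (f (a + s)) + G.edist (f (a + s)) (f (a + ↑(n / 2))) := G.edist_triangle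
      _ ≤ 1 + (n / 2 - s : ℕ) := add_le_add hchord (edist_add_le_sub_of_adj_add_one hf a hsm)
      _ ≤ (n / 2 - 1 : ℕ) := by norm_cast; omega
  by_cases hs : s + 2 ≤ n / 2 * 2
  · calc G.edist (f a) (f (a + ↑(n / 2)))
        ≤ G.edist (f a) (f (a + s)) + G.edist (f (a + s)) (f (a + ↑(n / 2))) := G.edist_triangle
      _ ≤ 1 + (s - n / 2 : ℕ) := by
          gcongr
          rw [edist_comm]; exact edist_add_le_sub_of_adj_add_one hf a (by omega)
      _ ≤ (n / 2 - 1 : ℕ) := by norm_cast; omega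
  have hodd : n = 2 * (n / 2) + 1 := by omega
  rw [show s = n - 2 by omega] at hadj
  exact edist_add_le_of_adj_add_sub_two hodd (by omega) hf hsurj a (hdeg _) hadj

lemma ediam_le_half_sub_one [G.LocallyFinite] (hn : 6 ≤ n)
    (hf : ∀ i, G.Adj (f i) (f (i + 1))) (hsurj : f.Surjective) (hdeg : ∀ v, 3 ≤ G.degree v) :
    G.ediam ≤ (n / 2 - 1 : ℕ) := by
  have hdist (x y : ZMod n) (h : (y - x).val ≤ n / 2) :
      G.edist (f x) (f y) ≤ (n / 2 - 1 : ℕ) := by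
    simpa only [ZMod.natCast_zmod_val, add_sub_cancel] using
      edist_add_le_of_le_half hn hf hsurj hdeg x h
  refine ediam_le_of_edist_le fun u v => ?_
  obtain ⟨x, rfl⟩ := hsurj u
  obtain ⟨y, rfl⟩ := hsurj v
  rcases le_or_gt (y - x).val (n / 2) with h | h
  · exact hdist x y h
  · rw [edist_comm]
    refine hdist y x ?_
    rw [← neg_sub, ZMod.neg_val]
    split_ifs <;> omega

end ZModEnumeration

end SimpleGraph

/-- A Hamiltonian graph of order `n ≥ 6` with minimum degree at least 3
has diameter at most `⌊n/2⌋ - 1`. -/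
theorem stmt_13 {V : Type*} [Fintype V] [DecidableEq V] (H : SimpleGraph V) [DecidableRel H.Adj]
    (hn : 6 ≤ Fintype.card V) (hham : H.IsHamiltonian) (hδ : 3 ≤ H.minDegree) :
    H.diam ≤ Fintype.card V / 2 - 1 := by
  obtain ⟨f, hf, hsurj⟩ := hham.exists_surjective_adj_add_one (by omega)
  have : NeZero (Fintype.card V) := ⟨by omega⟩
  have hdeg (v : V) : 3 ≤ H.degree v := hδ.trans (H.minDegree_le_degree v)
  exact ENat.toNat_le_of_le_natCast (H.ediam_le_half_sub_one hn hf hsurj hdeg)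
end

section
/- For every even integer n ≥ 8, the graph A_n is a 2-connected simple graph of order n with exactly 3n/2 edges in which every edge lies in a triangle. -/
/-!
`A_n` has the Hamiltonian cycle `v₁ u₁ v₂ u₂ ⋯ v_q u_q v₁`, and a graph with a Hamiltonian
cycle stays connected after deleting any vertex, since the rest of the cycle is a path through
all remaining vertices. Every edge of `A_n` lies in one of the triangles `vᵢ uᵢ vᵢ₊₁`. The `vᵢ`
have degree `4` and the `uᵢ` degree `2`, so `A_n` has `(4q + 2q) / 2 = 3q` edges.
-/

namespace SimpleGraph

variable {α β : Type*} {G : SimpleGraph α} {H : SimpleGraph β}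

def cycleGraphHomOfAdj {n : ℕ} (f : Fin (n + 2) → α) (hf : ∀ i, G.Adj (f i) (f (i + 1))) :
    cycleGraph (n + 2) →g G where
  toFun := f
  map_rel' := by
    rintro u v (h | h) <;> rw [sub_eq_iff_eq_add'] at h <;> subst h
    · exact (hf v).symm
    · exact hf u

theorem cycleGraph_isHamiltonian (n : ℕ) : (cycleGraph (n + 3)).IsHamiltonian := fun _ =>
  ⟨0, cycleGraph.cycle n,
    Walk.isHamiltonianCycle_iff_isCycle_and_length_eq.2 ⟨cycleGraph.isCycle_cycle, by simp⟩⟩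

theorem IsHamiltonian.of_bijective_hom [Fintype α] [Fintype β] [DecidableEq α] [DecidableEq β]
    (hG : G.IsHamiltonian) (f : G →g H) (hf : Function.Bijective f) : H.IsHamiltonian :=
  fun hβ => by
    obtain ⟨a, p, hp⟩ := hG (by rwa [Fintype.card_of_bijective hf])
    exact ⟨f a, p.map f, hp.map hf⟩

theorem Walk.IsHamiltonianCycle.connected_induce_compl_singleton [DecidableEq α] {v : α}
    {p : G.Walk v v} (hp : p.IsHamiltonianCycle) : (G.induce {v}ᶜ).Connected := by
  have hnil : ¬p.tail.Nil := by
    rw [← Walk.length_eq_zero_iff, Walk.length_tail]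
    have := hp.isCycle.three_le_length
    omega
  -- `p.tail` visits every vertex once and ends at `v`, so `p.tail.dropLast` visits all the others.
  have hsupport : {x | x ∈ p.tail.dropLast.support} = {v}ᶜ := by
    ext x
    have hcount := hp.isHamiltonian_tail x
    rw [← Walk.support_dropLast_concat hnil, List.count_append, List.count_singleton] at hcount
    simp only [Set.mem_ofPred_eq, Set.mem_compl_iff, Set.mem_singleton_iff, ← List.count_pos_iff]
    split_ifs at hcount <;> grind
  rw [← hsupport]
  exact p.tail.dropLast.connected_induce_support

theorem IsHamiltonian.twoConnected [Fintype α] [DecidableEq α] [Nontrivial α]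
    (hG : G.IsHamiltonian) : TwoConnected G := by
  refine ⟨?_, fun v => ?_⟩
  · obtain ⟨p, hp⟩ := hG.exists_isHamiltonianCycle (Classical.arbitrary α)
    rw [Nat.card_eq_fintype_card, ← hp.length_eq]
    exact hp.isCycle.three_le_length
  · obtain ⟨p, hp⟩ := hG.exists_isHamiltonianCycle v
    exact hp.connected_induce_compl_singleton

end SimpleGraph

open SimpleGraph Sum

variable {q : ℕ}

@[simp]
theorem graphA_adj_inl_inl {a b : ZMod q} :
    (graphA q).Adj (inl a) (inl b) ↔ a ≠ b ∧ (a = b + 1 ∨ b = a + 1) := by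
  simp [graphA, ARel]

@[simp]
theorem graphA_adj_inr_inl {a b : ZMod q} :
    (graphA q).Adj (inr a) (inl b) ↔ b = a ∨ b = a + 1 := by
  simp [graphA, ARel]

@[simp]
theorem graphA_adj_inl_inr {a b : ZMod q} :
    (graphA q).Adj (inl b) (inr a) ↔ b = a ∨ b = a + 1 := by
  simp [graphA, ARel]

@[simp]
theorem graphA_not_adj_inr_inr {a b : ZMod q} : ¬(graphA q).Adj (inr a) (inr b) := by
  simp [graphA, ARel]

theorem graphA_everyEdgeInTriangle [Nontrivial (ZMod q)] : EveryEdgeInTriangle (graphA q) := by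
  rintro (a | a) (b | b) h
  · obtain ⟨-, h | h⟩ := graphA_adj_inl_inl.1 h <;> subst h
    · exact ⟨inr b, by simp, by simp⟩
    · exact ⟨inr a, by simp, by simp⟩
  · obtain h | h := graphA_adj_inl_inr.1 h <;> subst a
    · exact ⟨inl (b + 1), by simp, by simp⟩
    · exact ⟨inl b, by simp, by simp⟩
  · obtain h | h := graphA_adj_inr_inl.1 h <;> subst b
    · exact ⟨inl (a + 1), by simp, by simp⟩
    · exact ⟨inl a, by simp, by simp⟩
  · exact absurd h graphA_not_adj_inr_inr

/-- The `m`-th vertex of the closed walk `v₀ u₀ v₁ u₁ ⋯ v_{q-1} u_{q-1} v₀`. -/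
def graphAZigzag (q m : ℕ) : ZMod q ⊕ ZMod q :=
  if Even m then inl (m / 2 : ℕ) else inr (m / 2 : ℕ)

theorem graphA_adj_zigzag_succ (m : ℕ) :
    (graphA q).Adj (graphAZigzag q m) (graphAZigzag q (m + 1)) := by
  rcases Nat.even_or_odd m with ⟨i, rfl⟩ | ⟨i, rfl⟩
  · have h₀ : (i + i) / 2 = i := by omega
    have h₁ : (i + i + 1) / 2 = i := by omega
    simp [graphAZigzag, Nat.even_add_one, h₀, h₁]
  · have h₀ : (2 * i + 1) / 2 = i := by omega
    have h₁ : (2 * i + 1 + 1) / 2 = i + 1 := by omega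
    simp [graphAZigzag, Nat.even_add_one, h₀, h₁]

theorem graphAZigzag_two_mul_self : graphAZigzag q (2 * q) = graphAZigzag q 0 := by
  simp [graphAZigzag]

theorem graphA_isHamiltonian [Fact (1 < q)] : (graphA q).IsHamiltonian := by
  obtain ⟨n, hn⟩ : ∃ n, 2 * q = n + 3 := ⟨2 * q - 3, by have := Fact.out (p := 1 < q); omega⟩
  have hadj (i : Fin (n + 3)) :
      (graphA q).Adj (graphAZigzag q i) (graphAZigzag q ↑(i + 1)) := by
    rw [Fin.val_add_one]
    split_ifs with hi
    · rw [← graphAZigzag_two_mul_self, hn, hi, Fin.val_last]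
      exact graphA_adj_zigzag_succ _
    · exact graphA_adj_zigzag_succ _
  let f : cycleGraph (n + 3) →g graphA q := cycleGraphHomOfAdj (fun i => graphAZigzag q i) hadj
  refine (cycleGraph_isHamiltonian n).of_bijective_hom f ?_
  rw [Fintype.bijective_iff_surjective_and_card]
  refine ⟨?_, by simp; omega⟩
  rintro (x | x)
  · refine ⟨⟨2 * x.val, by have := x.val_lt; omega⟩, ?_⟩
    simp [f, cycleGraphHomOfAdj, graphAZigzag]
  · refine ⟨⟨2 * x.val + 1, by have := x.val_lt; omega⟩, ?_⟩
    have h : (2 * x.val + 1) / 2 = x.val := by omega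
    simp [f, cycleGraphHomOfAdj, graphAZigzag, h]

theorem graphA_twoConnected [Fact (1 < q)] : TwoConnected (graphA q) :=
  have : Nontrivial (ZMod q ⊕ ZMod q) := ⟨inl 0, inr 0, inl_ne_inr⟩
  graphA_isHamiltonian.twoConnected

section Degree

variable [NeZero q] [DecidableRel (graphA q).Adj]

theorem graphA_neighborFinset_inl [Nontrivial (ZMod q)] (b : ZMod q) :
    (graphA q).neighborFinset (inl b) = {inl (b + 1), inl (b - 1), inr b, inr (b - 1)} := by
  ext (c | c)
  · simp only [mem_neighborFinset, graphA_adj_inl_inl, Finset.mem_insert, Finset.mem_singleton,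
      inl.injEq, reduceCtorEq, or_false]
    constructor
    · rintro ⟨-, rfl | rfl⟩
      · exact Or.inr (by ring)
      · exact Or.inl rfl
    · rintro (rfl | rfl)
      · simp
      · exact ⟨fun h => one_ne_zero (sub_eq_self.1 h.symm), Or.inl (sub_add_cancel b 1).symm⟩
  · simp only [mem_neighborFinset, graphA_adj_inl_inr, Finset.mem_insert, Finset.mem_singleton,
      inr.injEq, reduceCtorEq, false_or, eq_sub_iff_add_eq]
    exact or_congr eq_comm eq_comm

theorem graphA_neighborFinset_inr (a : ZMod q) :
    (graphA q).neighborFinset (inr a) = {inl a, inl (a + 1)} := by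
  ext (c | c) <;> simp

theorem graphA_degree_inl (h2 : (2 : ZMod q) ≠ 0) (b : ZMod q) :
    (graphA q).degree (inl b) = 4 := by
  have : Nontrivial (ZMod q) := ⟨⟨2, 0, h2⟩⟩
  have hb : b + 1 ≠ b - 1 := fun h => h2 (by linear_combination h)
  have hb' : b ≠ b - 1 := fun h => one_ne_zero (sub_eq_self.1 h.symm)
  rw [degree, graphA_neighborFinset_inl]
  simp [Finset.card_insert_of_notMem, hb, hb']

theorem graphA_degree_inr [Nontrivial (ZMod q)] (a : ZMod q) :
    (graphA q).degree (inr a) = 2 := by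
  rw [degree, graphA_neighborFinset_inr, Finset.card_pair (by simp)]

end Degree

theorem graphA_card_edgeSet [NeZero q] (h2 : (2 : ZMod q) ≠ 0) :
    Nat.card (graphA q).edgeSet = 3 * q := by
  classical
  have : Nontrivial (ZMod q) := ⟨⟨2, 0, h2⟩⟩
  have hsum := sum_degrees_eq_twice_card_edges (graphA q)
  simp only [Fintype.sum_sum_type, graphA_degree_inl h2, graphA_degree_inr, Finset.sum_const,
    Finset.card_univ, ZMod.card, smul_eq_mul] at hsum
  rw [Nat.card_eq_fintype_card, ← edgeFinset_card]
  omega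

/-- For every even `n ≥ 8`, the graph `A_n` is a 2-connected graph of
order `n` with exactly `3n/2` edges in which every edge lies in a triangle. -/
theorem stmt_15 (n : ℕ) (hn : 8 ≤ n) (heven : Even n) :
    Nat.card (ZMod (n / 2) ⊕ ZMod (n / 2)) = n ∧
    TwoConnected (graphA (n / 2)) ∧
    numEdges (graphA (n / 2)) = 3 * n / 2 ∧
    EveryEdgeInTriangle (graphA (n / 2)) := by
  obtain ⟨q, rfl⟩ := heven
  rw [show (q + q) / 2 = q by omega]
  have : Fact (1 < q) := ⟨by omega⟩
  have h2 : (2 : ZMod q) ≠ 0 := by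
    rw [← Nat.cast_ofNat, Ne, ZMod.natCast_eq_zero_iff]
    exact Nat.not_dvd_of_pos_of_lt two_pos (by omega)
  refine ⟨?_, graphA_twoConnected, ?_, graphA_everyEdgeInTriangle⟩
  · simp [Nat.card_eq_fintype_card]
  · rw [numEdges, graphA_card_edgeSet h2]
    omega
end

section
/- For every odd integer n ≥ 9, each of the graphs F_n, G_n, and H_n is a 2-connected simple graph of order n with exactly (3n+1)/2 edges in which every edge lies in a triangle. -/
/-! ### Auxiliary general lemmas -/

lemma zmod_natCast_ne_zero_s19 {q : ℕ} {k : ℕ} (h1 : 0 < k) (h2 : k < q) : (k : ZMod q) ≠ 0 := by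
  intro h0
  have hd := (ZMod.natCast_eq_zero_iff k q).mp h0
  exact absurd (Nat.le_of_dvd h1 hd) (by omega)

lemma induce_adj' {V : Type*} {G : SimpleGraph V} {S : Set V} {a b : ↥S} (h : G.Adj ↑a ↑b) :
    (G.induce S).Adj a b := h

lemma reach_congr {V : Type*} {G : SimpleGraph V} {S : Set V} {x y t : ↥S}
    (h : (x : V) = (y : V)) (hr : (G.induce S).Reachable y t) :
    (G.induce S).Reachable x t := by
  rw [Subtype.ext h]; exact hr

lemma cycle_reach {m : ℕ} (hm : 2 ≤ m) {V : Type*} {G : SimpleGraph V} {S : Set V}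
    (v : ZMod m → V) (hadj : ∀ a, G.Adj (v a) (v (a + 1))) (c : ZMod m)
    (hmem : ∀ a, a ≠ c → v a ∈ S) (hc1 : c + 1 ≠ c) :
    ∀ a, ∀ ha : a ≠ c, (G.induce S).Reachable ⟨v a, hmem a ha⟩ ⟨v (c + 1), hmem _ hc1⟩ := by
  have hne : ∀ k : ℕ, k + 1 < m → c + 1 + (k : ZMod m) ≠ c := by
    intro k hk h
    have h2 : ((1 + k : ℕ) : ZMod m) = 0 := by
      push_cast
      rw [add_assoc] at h
      exact add_left_cancel (a := c) (by rw [h, add_zero] : c + ((1 : ZMod m) + k) = c + 0)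
    exact zmod_natCast_ne_zero_s19 (by omega) (by omega) h2
  have key : ∀ k : ℕ, ∀ hk : k + 1 < m,
      (G.induce S).Reachable ⟨v (c + 1 + (k : ZMod m)), hmem _ (hne k hk)⟩
        ⟨v (c + 1), hmem _ hc1⟩ := by
    intro k
    induction k with
    | zero => intro _; convert SimpleGraph.Reachable.refl _ using 2 <;> push_cast <;> ring
    | succ k ih =>
      intro hk
      have hstep : G.Adj (v (c + 1 + (k : ZMod m))) (v (c + 1 + ((k + 1 : ℕ) : ZMod m))) := by
        push_cast
        rw [← add_assoc]
        exact hadj _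
      exact ((induce_adj' (S := S) (a := ⟨_, hmem _ (hne k (by omega))⟩)
        (b := ⟨_, hmem _ (hne (k+1) hk)⟩) hstep).symm.reachable).trans (ih (by omega))
  intro a ha
  haveI : NeZero m := ⟨by omega⟩
  set k := (a - (c + 1)).val with hkdef
  have hval : ((k : ℕ) : ZMod m) = a - (c + 1) := ZMod.natCast_zmod_val _
  have hklt : k < m := ZMod.val_lt _
  have hk1 : k + 1 < m := by
    rcases Nat.lt_or_ge (k+1) m with h | h
    · exact h
    · exfalso
      have hkm : k = m - 1 := by omega
      have h3 : a - (c+1) = ((m - 1 : ℕ) : ZMod m) := by rw [← hval, hkm]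
      have hm1 : ((m - 1 : ℕ) : ZMod m) = -1 := by
        have h4 : ((m : ℕ) : ZMod m) = 0 := ZMod.natCast_self m
        push_cast [Nat.cast_sub (by omega : 1 ≤ m)]
        rw [h4]; ring
      rw [hm1] at h3
      exact ha (by linear_combination h3)
  have hrw : c + 1 + (k : ZMod m) = a := by rw [hval]; ring
  have := key k hk1
  convert this using 2 <;> rw [hrw]

/-! ### Setup for the concrete graphs -/

section

variable {q : ℕ}

/-- The cycle vertex `vₐ`. -/
abbrev vtx (a : ZMod q) : Option (ZMod q ⊕ ZMod q) := some (Sum.inl a)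

/-- The pendant-triangle vertex `uₐ`. -/
abbrev utx (a : ZMod q) : Option (ZMod q ⊕ ZMod q) := some (Sum.inr a)

variable (hq : 4 ≤ q)
include hq

lemma zm10 : (1 : ZMod q) ≠ 0 := by
  have := zmod_natCast_ne_zero_s19 (q := q) (k := 1) one_pos (by omega)
  simpa using this

lemma zm20 : (2 : ZMod q) ≠ 0 := by
  have := zmod_natCast_ne_zero_s19 (q := q) (k := 2) two_pos (by omega)
  simpa using this

lemma zm12 : (1 : ZMod q) ≠ 2 := fun h => zm10 hq (by linear_combination (-1 : ZMod q) * h)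

lemma zmvne (a : ZMod q) : a ≠ a + 1 := fun h => zm10 hq (by linear_combination -h)

lemma zmsucc_ne (c : ZMod q) : c + 1 ≠ c := fun h => zm10 hq (by linear_combination h)

end

section

variable {q : ℕ} (hq : 4 ≤ q)
include hq

/-! ### Adjacency lemmas for F -/

lemma adjF_vv (a : ZMod q) : (graphF q).Adj (vtx a) (vtx (a + 1)) :=
  ⟨by simp [zmvne hq a], Or.inr rfl⟩

omit hq in
lemma adjF_uv1 (a : ZMod q) : (graphF q).Adj (utx a) (vtx a) :=
  ⟨by simp, Or.inl (Or.inl rfl)⟩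

omit hq in
lemma adjF_uv2 (a : ZMod q) : (graphF q).Adj (utx a) (vtx (a + 1)) :=
  ⟨by simp, Or.inl (Or.inr rfl)⟩

omit hq in
lemma adjF_x1 : (graphF q).Adj none (vtx (1 : ZMod q)) :=
  ⟨by simp, Or.inl (Or.inl rfl)⟩

omit hq in
lemma adjF_x2 : (graphF q).Adj none (vtx (2 : ZMod q)) :=
  ⟨by simp, Or.inl (Or.inr rfl)⟩

lemma triangleF : EveryEdgeInTriangle (graphF q) := by
  have e12 : ((1 : ZMod q) + 1) = 2 := by norm_num
  rintro (_ | (a | a)) (_ | (b | b)) h <;>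
    simp [graphF, SimpleGraph.fromRel_adj, ARel] at h
  case none.some.inl =>
    rcases h with h | h <;> subst h
    · exact ⟨vtx 2, adjF_x2, by have := adjF_vv hq 1; rwa [e12] at this⟩
    · exact ⟨vtx 1, adjF_x1, by have := adjF_vv hq 1; rw [e12] at this; exact this.symm⟩
  case some.inl.none =>
    rcases h with h | h <;> subst h
    · exact ⟨vtx 2, by have := adjF_vv hq 1; rwa [e12] at this, adjF_x2⟩
    · exact ⟨vtx 1, by have := adjF_vv hq 1; rw [e12] at this; exact this.symm, adjF_x1⟩
  case some.inl.some.inl =>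
    rcases h.2 with h1 | h1 <;> subst h1
    · exact ⟨utx b, (adjF_uv2 b).symm, (adjF_uv1 b).symm⟩
    · exact ⟨utx a, (adjF_uv1 a).symm, (adjF_uv2 a).symm⟩
  case some.inl.some.inr =>
    rcases h with h1 | h1 <;> subst h1
    · exact ⟨vtx (a + 1), adjF_vv hq a, adjF_uv2 a⟩
    · exact ⟨vtx b, (adjF_vv hq b).symm, adjF_uv1 b⟩
  case some.inr.some.inl =>
    rcases h with h1 | h1 <;> subst h1
    · exact ⟨vtx (b + 1), adjF_uv2 b, adjF_vv hq b⟩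
    · exact ⟨vtx a, adjF_uv1 a, (adjF_vv hq a).symm⟩

/-! ### Adjacency lemmas for G -/

lemma adjG_vv (a : ZMod q) : (graphG q).Adj (vtx a) (vtx (a + 1)) :=
  ⟨by simp [zmvne hq a], Or.inr rfl⟩

omit hq in
lemma adjG_uv1 (a : ZMod q) : (graphG q).Adj (utx a) (vtx a) :=
  ⟨by simp, Or.inl (Or.inl rfl)⟩

omit hq in
lemma adjG_uv2 (a : ZMod q) : (graphG q).Adj (utx a) (vtx (a + 1)) :=
  ⟨by simp, Or.inl (Or.inr rfl)⟩

omit hq in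
lemma adjG_xu : (graphG q).Adj none (utx (1 : ZMod q)) :=
  ⟨by simp, Or.inl (Or.inl rfl)⟩

omit hq in
lemma adjG_xv : (graphG q).Adj none (vtx (1 : ZMod q)) :=
  ⟨by simp, Or.inl (Or.inr rfl)⟩

lemma triangleG : EveryEdgeInTriangle (graphG q) := by
  rintro (_ | (a | a)) (_ | (b | b)) h <;>
    simp [graphG, SimpleGraph.fromRel_adj, ARel] at h
  case none.some.inl =>
    subst h
    exact ⟨utx 1, adjG_xu, (adjG_uv1 1).symm⟩
  case none.some.inr =>
    subst h
    exact ⟨vtx 1, adjG_xv, adjG_uv1 1⟩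
  case some.inl.none =>
    subst h
    exact ⟨utx 1, (adjG_uv1 1).symm, adjG_xu⟩
  case some.inr.none =>
    subst h
    exact ⟨vtx 1, adjG_uv1 1, adjG_xv⟩
  case some.inl.some.inl =>
    rcases h.2 with h1 | h1 <;> subst h1
    · exact ⟨utx b, (adjG_uv2 b).symm, (adjG_uv1 b).symm⟩
    · exact ⟨utx a, (adjG_uv1 a).symm, (adjG_uv2 a).symm⟩
  case some.inl.some.inr =>
    rcases h with h1 | h1 <;> subst h1
    · exact ⟨vtx (a + 1), adjG_vv hq a, adjG_uv2 a⟩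
    · exact ⟨vtx b, (adjG_vv hq b).symm, adjG_uv1 b⟩
  case some.inr.some.inl =>
    rcases h with h1 | h1 <;> subst h1
    · exact ⟨vtx (b + 1), adjG_uv2 b, adjG_vv hq b⟩
    · exact ⟨vtx a, adjG_uv1 a, (adjG_vv hq a).symm⟩

/-! ### Adjacency lemmas for H -/

lemma adjH_vv (a : ZMod q) (ha : a ≠ 1) : (graphH q).Adj (vtx a) (vtx (a + 1)) :=
  ⟨by simp [zmvne hq a], Or.inr ⟨rfl, fun hc => ha hc.2,
    fun hc => zm20 hq (by linear_combination hc.1 - hc.2)⟩⟩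

omit hq in
lemma adjH_uv1 (a : ZMod q) : (graphH q).Adj (utx a) (vtx a) :=
  ⟨by simp, Or.inl (Or.inl rfl)⟩

omit hq in
lemma adjH_uv2 (a : ZMod q) : (graphH q).Adj (utx a) (vtx (a + 1)) :=
  ⟨by simp, Or.inl (Or.inr rfl)⟩

omit hq in
lemma adjH_x1 : (graphH q).Adj none (vtx (1 : ZMod q)) :=
  ⟨by simp, Or.inl (Or.inl rfl)⟩

omit hq in
lemma adjH_x2 : (graphH q).Adj none (vtx (2 : ZMod q)) :=
  ⟨by simp, Or.inl (Or.inr (Or.inl rfl))⟩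

omit hq in
lemma adjH_xu : (graphH q).Adj none (utx (1 : ZMod q)) :=
  ⟨by simp, Or.inl (Or.inr (Or.inr rfl))⟩

lemma triangleH : EveryEdgeInTriangle (graphH q) := by
  have e12 : ((1 : ZMod q) + 1) = 2 := by norm_num
  rintro (_ | (a | a)) (_ | (b | b)) h <;>
    simp [graphH, SimpleGraph.fromRel_adj, ARel] at h
  case none.some.inl =>
    rcases h with h | h <;> subst h
    · exact ⟨utx 1, adjH_xu, (adjH_uv1 1).symm⟩
    · exact ⟨utx 1, adjH_xu, by have := (adjH_uv2 (q := q) 1).symm; rwa [e12] at this⟩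
  case none.some.inr =>
    subst h
    exact ⟨vtx 1, adjH_x1, adjH_uv1 1⟩
  case some.inl.none =>
    rcases h with h | h <;> subst h
    · exact ⟨utx 1, (adjH_uv1 1).symm, adjH_xu⟩
    · exact ⟨utx 1, by have := (adjH_uv2 (q := q) 1).symm; rwa [e12] at this, adjH_xu⟩
  case some.inr.none =>
    subst h
    exact ⟨vtx 1, adjH_uv1 1, adjH_x1⟩
  case some.inl.some.inl =>
    rcases h.2 with ⟨h1, -⟩ | ⟨h1, -⟩ <;> subst h1
    · exact ⟨utx b, (adjH_uv2 b).symm, (adjH_uv1 b).symm⟩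
    · exact ⟨utx a, (adjH_uv1 a).symm, (adjH_uv2 a).symm⟩
  case some.inl.some.inr =>
    rcases h with h1 | h1 <;> subst h1
    · by_cases ha : a = 1
      · subst ha
        exact ⟨none, adjH_x1.symm, adjH_xu.symm⟩
      · exact ⟨vtx (a + 1), adjH_vv hq a ha, adjH_uv2 a⟩
    · by_cases hb : b = 1
      · subst hb
        exact ⟨none, by have := (adjH_x2 (q := q)).symm; rwa [← e12] at this, adjH_xu.symm⟩
      · exact ⟨vtx b, (adjH_vv hq b hb).symm, adjH_uv1 b⟩
  case some.inr.some.inl =>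
    rcases h with h1 | h1 <;> subst h1
    · by_cases hb : b = 1
      · subst hb
        exact ⟨none, adjH_xu.symm, adjH_x1.symm⟩
      · exact ⟨vtx (b + 1), adjH_uv2 b, adjH_vv hq b hb⟩
    · by_cases ha : a = 1
      · subst ha
        exact ⟨none, adjH_xu.symm, by have := (adjH_x2 (q := q)).symm; rwa [← e12] at this⟩
      · exact ⟨vtx a, adjH_uv1 a, (adjH_vv hq a ha).symm⟩

end

/-! ### Edge counting -/

def eIdxF (q : ℕ) : (ZMod q ⊕ ZMod q ⊕ ZMod q) ⊕ Bool → Sym2 (Option (ZMod q ⊕ ZMod q)) :=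
  fun i => match i with
    | .inl (.inl a) => s(vtx a, vtx (a + 1))
    | .inl (.inr (.inl a)) => s(utx a, vtx a)
    | .inl (.inr (.inr a)) => s(utx a, vtx (a + 1))
    | .inr false => s(none, vtx 1)
    | .inr true => s(none, vtx 2)

def eIdxG (q : ℕ) : (ZMod q ⊕ ZMod q ⊕ ZMod q) ⊕ Bool → Sym2 (Option (ZMod q ⊕ ZMod q)) :=
  fun i => match i with
    | .inl (.inl a) => s(vtx a, vtx (a + 1))
    | .inl (.inr (.inl a)) => s(utx a, vtx a)
    | .inl (.inr (.inr a)) => s(utx a, vtx (a + 1))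
    | .inr false => s(none, utx 1)
    | .inr true => s(none, vtx 1)

def eIdxH (q : ℕ) : (ZMod q ⊕ ZMod q ⊕ ZMod q) ⊕ Bool → Sym2 (Option (ZMod q ⊕ ZMod q)) :=
  fun i => match i with
    | .inl (.inl a) => if a = 1 then s(none, utx 1) else s(vtx a, vtx (a + 1))
    | .inl (.inr (.inl a)) => s(utx a, vtx a)
    | .inl (.inr (.inr a)) => s(utx a, vtx (a + 1))
    | .inr false => s(none, vtx 1)
    | .inr true => s(none, vtx 2)

section
variable {q : ℕ} (hq : 4 ≤ q)
include hq

lemma cardIdx : Nat.card ((ZMod q ⊕ ZMod q ⊕ ZMod q) ⊕ Bool) = 3 * q + 2 := by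
  haveI : NeZero q := ⟨by omega⟩
  simp [Nat.card_eq_fintype_card, ZMod.card]
  ring

lemma injF : Function.Injective (eIdxF q) := by
  rintro ((a|a|a)|(_|_)) ((b|b|b)|(_|_)) hij <;>
    simp [eIdxF, Sym2.eq_iff] at hij ⊢ <;>
    try tauto
  case inl.inl.inl.inl =>
    rcases hij with h | ⟨h1, h2⟩
    · exact h
    · exact absurd (by linear_combination h2 - h1 : (2 : ZMod q) = 0) (zm20 hq)
  case inl.inr.inl.inl.inr.inr =>
    exact zm10 hq (by linear_combination hij.1 - hij.2)
  case inl.inr.inr.inl.inr.inl =>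
    exact zm10 hq (by linear_combination hij.2 - hij.1)
  case inr.false.inr.true => exact zm12 hq hij
  case inr.true.inr.false => exact zm12 hq hij.symm

lemma rangeF : (graphF q).edgeSet = Set.range (eIdxF q) := by
  apply Set.eq_of_subset_of_subset
  · intro e he
    induction e using Sym2.ind with
    | _ x y =>
      rw [SimpleGraph.mem_edgeSet] at he
      revert he
      rintro h
      rcases x with _ | (a | a) <;> rcases y with _ | (b | b) <;>
        simp [graphF, SimpleGraph.fromRel_adj, ARel] at h
      · rcases h with h | h <;> subst h
        · exact ⟨.inr false, rfl⟩
        · exact ⟨.inr true, rfl⟩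
      ·
        rcases h with h | h <;> subst h
        · exact ⟨.inr false, by simp [eIdxF, Sym2.eq_swap]⟩
        · exact ⟨.inr true, by simp [eIdxF, Sym2.eq_swap]⟩
      · rcases h.2 with h1 | h1 <;> subst h1
        · exact ⟨.inl (.inl b), by simp [eIdxF, Sym2.eq_swap]⟩
        · exact ⟨.inl (.inl a), rfl⟩
      · rcases h with h1 | h1 <;> subst h1
        · exact ⟨.inl (.inr (.inl a)), by simp [eIdxF, Sym2.eq_swap]⟩
        · exact ⟨.inl (.inr (.inr b)), by simp [eIdxF, Sym2.eq_swap]⟩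
      · rcases h with h1 | h1 <;> subst h1
        · exact ⟨.inl (.inr (.inl b)), rfl⟩
        · exact ⟨.inl (.inr (.inr a)), rfl⟩
  · rintro e ⟨i, rfl⟩
    rcases i with (a|a|a)|(_|_) <;> simp only [eIdxF, SimpleGraph.mem_edgeSet]
    · exact adjF_vv hq a
    · exact adjF_uv1 a
    · exact adjF_uv2 a
    · exact adjF_x1
    · exact adjF_x2

lemma numEdgesF : numEdges (graphF q) = 3 * q + 2 := by
  rw [numEdges, rangeF hq, Nat.card_range_of_injective (injF hq), cardIdx hq]

end

section
variable {q : ℕ} (hq : 4 ≤ q)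
include hq

lemma injG : Function.Injective (eIdxG q) := by
  rintro ((a|a|a)|(_|_)) ((b|b|b)|(_|_)) hij <;>
    simp [eIdxG, Sym2.eq_iff] at hij ⊢ <;>
    try tauto
  case inl.inl.inl.inl =>
    rcases hij with h | ⟨h1, h2⟩
    · exact h
    · exact absurd (by linear_combination h2 - h1 : (2 : ZMod q) = 0) (zm20 hq)
  case inl.inr.inl.inl.inr.inr =>
    exact zm10 hq (by linear_combination hij.1 - hij.2)
  case inl.inr.inr.inl.inr.inl =>
    exact zm10 hq (by linear_combination hij.2 - hij.1)

lemma rangeG : (graphG q).edgeSet = Set.range (eIdxG q) := by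
  apply Set.eq_of_subset_of_subset
  · intro e he
    induction e using Sym2.ind with
    | _ x y =>
      rw [SimpleGraph.mem_edgeSet] at he
      revert he
      rintro h
      rcases x with _ | (a | a) <;> rcases y with _ | (b | b) <;>
        simp [graphG, SimpleGraph.fromRel_adj, ARel] at h
      · subst h
        exact ⟨.inr true, rfl⟩
      · subst h
        exact ⟨.inr false, rfl⟩
      · subst h
        exact ⟨.inr true, by simp [eIdxG, Sym2.eq_swap]⟩
      · rcases h.2 with h1 | h1 <;> subst h1
        · exact ⟨.inl (.inl b), by simp [eIdxG, Sym2.eq_swap]⟩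
        · exact ⟨.inl (.inl a), rfl⟩
      · rcases h with h1 | h1 <;> subst h1
        · exact ⟨.inl (.inr (.inl a)), by simp [eIdxG, Sym2.eq_swap]⟩
        · exact ⟨.inl (.inr (.inr b)), by simp [eIdxG, Sym2.eq_swap]⟩
      · subst h
        exact ⟨.inr false, by simp [eIdxG, Sym2.eq_swap]⟩
      · rcases h with h1 | h1 <;> subst h1
        · exact ⟨.inl (.inr (.inl b)), rfl⟩
        · exact ⟨.inl (.inr (.inr a)), rfl⟩
  · rintro e ⟨i, rfl⟩
    rcases i with (a|a|a)|(_|_) <;> simp only [eIdxG, SimpleGraph.mem_edgeSet]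
    · exact adjG_vv hq a
    · exact adjG_uv1 a
    · exact adjG_uv2 a
    · exact adjG_xu
    · exact adjG_xv

lemma numEdgesG : numEdges (graphG q) = 3 * q + 2 := by
  rw [numEdges, rangeG hq, Nat.card_range_of_injective (injG hq), cardIdx hq]

lemma injH : Function.Injective (eIdxH q) := by
  rintro ((a|a|a)|(_|_)) ((b|b|b)|(_|_)) hij <;>
    simp only [eIdxH] at hij <;>
    (try split_ifs at hij) <;>
    simp [Sym2.eq_iff] at hij ⊢ <;>
    try tauto
  case pos h1 h2 => rw [h1, h2]
  case neg =>
    rcases hij with h | ⟨h1, h2⟩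
    · exact h
    · exact absurd (by linear_combination h2 - h1 : (2 : ZMod q) = 0) (zm20 hq)
  case inl.inr.inl.inl.inr.inr =>
    exact zm10 hq (by linear_combination hij.1 - hij.2)
  case inl.inr.inr.inl.inr.inl =>
    exact zm10 hq (by linear_combination hij.2 - hij.1)
  case inr.false.inr.true => exact zm12 hq hij
  case inr.true.inr.false => exact zm12 hq hij.symm

lemma rangeH : (graphH q).edgeSet = Set.range (eIdxH q) := by
  apply Set.eq_of_subset_of_subset
  · intro e he
    induction e using Sym2.ind with
    | _ x y =>
      rw [SimpleGraph.mem_edgeSet] at he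
      revert he
      rintro h
      rcases x with _ | (a | a) <;> rcases y with _ | (b | b) <;>
        simp [graphH, SimpleGraph.fromRel_adj, ARel] at h
      · -- none, vtx b
        rcases h with h | h <;> subst h
        · exact ⟨.inr false, rfl⟩
        · exact ⟨.inr true, rfl⟩
      · -- none, utx b
        subst h
        exact ⟨.inl (.inl 1), by simp [eIdxH]⟩
      · -- vtx a, none
        rcases h with h | h <;> subst h
        · exact ⟨.inr false, by simp [eIdxH, Sym2.eq_swap]⟩
        · exact ⟨.inr true, by simp [eIdxH, Sym2.eq_swap]⟩
      · -- vtx a, vtx b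
        rcases h.2 with ⟨h1, hn, -⟩ | ⟨h1, hn, -⟩ <;> subst h1
        · have hb : b ≠ 1 := fun hb => hn (by rw [hb]; norm_num) hb
          exact ⟨.inl (.inl b), by simp [eIdxH, if_neg hb, Sym2.eq_swap]⟩
        · have ha : a ≠ 1 := fun ha2 => hn (by rw [ha2]; norm_num) ha2
          exact ⟨.inl (.inl a), by simp [eIdxH, if_neg ha]⟩
      · -- vtx a, utx b
        rcases h with h1 | h1 <;> subst h1
        · exact ⟨.inl (.inr (.inl a)), by simp [eIdxH, Sym2.eq_swap]⟩
        · exact ⟨.inl (.inr (.inr b)), by simp [eIdxH, Sym2.eq_swap]⟩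
      · -- utx a, none
        subst h
        exact ⟨.inl (.inl 1), by simp [eIdxH, Sym2.eq_swap]⟩
      · -- utx a, vtx b
        rcases h with h1 | h1 <;> subst h1
        · exact ⟨.inl (.inr (.inl b)), rfl⟩
        · exact ⟨.inl (.inr (.inr a)), rfl⟩
  · rintro e ⟨i, rfl⟩
    rcases i with (a|a|a)|(_|_) <;> simp only [eIdxH, SimpleGraph.mem_edgeSet]
    · split_ifs with h1
      · subst h1; exact (SimpleGraph.mem_edgeSet _).mpr adjH_xu
      · exact (SimpleGraph.mem_edgeSet _).mpr (adjH_vv hq a h1)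
    · exact adjH_uv1 a
    · exact adjH_uv2 a
    · exact adjH_x1
    · exact adjH_x2

lemma numEdgesH : numEdges (graphH q) = 3 * q + 2 := by
  rw [numEdges, rangeH hq, Nat.card_range_of_injective (injH hq), cardIdx hq]

end

/-! ### Connectivity -/

section
variable {q : ℕ} (hq : 4 ≤ q)

omit hq in
lemma vtx_mem_del {c a : ZMod q} (ha : a ≠ c) :
    vtx a ∈ ({vtx c}ᶜ : Set (Option (ZMod q ⊕ ZMod q))) := by
  simpa using fun h => ha h

omit hq in
lemma step_reach {G : SimpleGraph (Option (ZMod q ⊕ ZMod q))}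
    {S : Set (Option (ZMod q ⊕ ZMod q))} {x : Option (ZMod q ⊕ ZMod q)} {y t : ↥S}
    (hx : x ∈ S) (h : G.Adj x ↑y) (hr : (G.induce S).Reachable y t) :
    (G.induce S).Reachable ⟨x, hx⟩ t :=
  (induce_adj' (a := ⟨x, hx⟩) (b := y) h).reachable.trans hr

include hq

lemma reach_del_vtx (G : SimpleGraph (Option (ZMod q ⊕ ZMod q)))
    (hvv : ∀ a : ZMod q, G.Adj (vtx a) (vtx (a + 1))) (c : ZMod q) :
    ∀ a, ∀ ha : a ≠ c, (G.induce ({vtx c}ᶜ : Set _)).Reachable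
      ⟨vtx a, vtx_mem_del ha⟩ ⟨vtx (c + 1), vtx_mem_del (zmsucc_ne hq c)⟩ :=
  cycle_reach (by omega) vtx hvv c (fun _ ha => vtx_mem_del ha) (zmsucc_ne hq c)

lemma reach_all_vtx (G : SimpleGraph (Option (ZMod q ⊕ ZMod q)))
    (hvv : ∀ a : ZMod q, G.Adj (vtx a) (vtx (a + 1))) (S : Set (Option (ZMod q ⊕ ZMod q)))
    (hS : ∀ a : ZMod q, vtx a ∈ S) :
    ∀ a : ZMod q, (G.induce S).Reachable ⟨vtx a, hS a⟩ ⟨vtx (0 + 1), hS _⟩ := by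
  have R := cycle_reach (m := q) (by omega) vtx hvv 0 (fun a _ => hS a) (zmsucc_ne hq 0)
  intro a
  by_cases h : a = 0
  · subst h
    exact (induce_adj' (a := ⟨vtx 0, hS 0⟩) (b := ⟨vtx (0 + 1), hS _⟩) (hvv 0)).reachable
  · exact R a h

lemma connF : ∀ d, ((graphF q).induce ({d}ᶜ : Set _)).Connected := by
  intro d
  rw [SimpleGraph.connected_iff_exists_forall_reachable]
  rcases d with _ | (c | c)
  · -- deleted vertex : none
    have hS : ∀ a : ZMod q, vtx a ∈ ({(none : Option (ZMod q ⊕ ZMod q))}ᶜ : Set _) := by simp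
    have R := reach_all_vtx hq _ (adjF_vv hq) _ hS
    refine ⟨⟨vtx (0 + 1), hS _⟩, ?_⟩
    rintro ⟨(_ | (a | a)), hx⟩
    · simp at hx
    · exact (R a).symm
    · exact (step_reach (by simp) (adjF_uv1 a) (R a)).symm
  · -- deleted vertex : vtx c
    have R := reach_del_vtx hq _ (adjF_vv hq) c
    refine ⟨⟨vtx (c + 1), vtx_mem_del (zmsucc_ne hq c)⟩, ?_⟩
    rintro ⟨(_ | (a | a)), hx⟩
    · -- none
      by_cases h1 : (1 : ZMod q) = c
      · have h2 : (2 : ZMod q) ≠ c := fun h => zm12 hq (h1.trans h.symm)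
        exact (step_reach (by simpa using hx) (adjF_x2 (q := q)) (R 2 h2)).symm
      · exact (step_reach (by simpa using hx) (adjF_x1 (q := q)) (R 1 h1)).symm
    · exact (R a (by simpa using hx)).symm
    · -- utx a
      by_cases h1 : a = c
      · subst h1
        have h2 : a + 1 ≠ a := zmsucc_ne hq a
        exact (step_reach (by simp) (adjF_uv2 a) (R (a + 1) h2)).symm
      · exact (step_reach (by simp) (adjF_uv1 a) (R a h1)).symm
  · -- deleted vertex : utx c
    have hS : ∀ a : ZMod q, vtx a ∈ ({utx c}ᶜ : Set (Option (ZMod q ⊕ ZMod q))) := by simp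
    have R := reach_all_vtx hq _ (adjF_vv hq) _ hS
    refine ⟨⟨vtx (0 + 1), hS _⟩, ?_⟩
    rintro ⟨(_ | (a | a)), hx⟩
    · exact (step_reach (by simp) (adjF_x1 (q := q)) (R 1)).symm
    · exact (R a).symm
    · exact (step_reach (by simpa using hx) (adjF_uv1 a) (R a)).symm

lemma connG : ∀ d, ((graphG q).induce ({d}ᶜ : Set _)).Connected := by
  intro d
  rw [SimpleGraph.connected_iff_exists_forall_reachable]
  rcases d with _ | (c | c)
  · have hS : ∀ a : ZMod q, vtx a ∈ ({(none : Option (ZMod q ⊕ ZMod q))}ᶜ : Set _) := by simp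
    have R := reach_all_vtx hq _ (adjG_vv hq) _ hS
    refine ⟨⟨vtx (0 + 1), hS _⟩, ?_⟩
    rintro ⟨(_ | (a | a)), hx⟩
    · simp at hx
    · exact (R a).symm
    · exact (step_reach (by simp) (adjG_uv1 a) (R a)).symm
  · -- deleted vertex : vtx c
    have R := reach_del_vtx hq _ (adjG_vv hq) c
    have hu : ∀ a : ZMod q, ((graphG q).induce ({vtx c}ᶜ : Set _)).Reachable
        ⟨utx a, by simp⟩ ⟨vtx (c + 1), vtx_mem_del (zmsucc_ne hq c)⟩ := by
      intro a
      by_cases h1 : a = c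
      · subst h1
        exact step_reach (by simp) (adjG_uv2 a) (R (a + 1) (zmsucc_ne hq a))
      · exact step_reach (by simp) (adjG_uv1 a) (R a h1)
    refine ⟨⟨vtx (c + 1), vtx_mem_del (zmsucc_ne hq c)⟩, ?_⟩
    rintro ⟨(_ | (a | a)), hx⟩
    · exact (step_reach (by simpa using hx) (adjG_xu (q := q)) (hu 1)).symm
    · exact (R a (by simpa using hx)).symm
    · exact (hu a).symm
  · -- deleted vertex : utx c
    have hS : ∀ a : ZMod q, vtx a ∈ ({utx c}ᶜ : Set (Option (ZMod q ⊕ ZMod q))) := by simp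
    have R := reach_all_vtx hq _ (adjG_vv hq) _ hS
    refine ⟨⟨vtx (0 + 1), hS _⟩, ?_⟩
    rintro ⟨(_ | (a | a)), hx⟩
    · exact (step_reach (by simp) (adjG_xv (q := q)) (R 1)).symm
    · exact (R a).symm
    · exact (step_reach (by simpa using hx) (adjG_uv1 a) (R a)).symm

end

/-! ### Connectivity of H -/

def wH (q : ℕ) : ZMod (q + 1) → Option (ZMod q ⊕ ZMod q) :=
  fun j => if j = 0 then none else vtx (1 + ((j.val : ℕ) : ZMod q))

section
variable {q : ℕ} (hq : 4 ≤ q)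
include hq

lemma zm10' : (1 : ZMod (q + 1)) ≠ 0 := by
  have := zmod_natCast_ne_zero_s19 (q := q + 1) (k := 1) one_pos (by omega)
  simpa using this

lemma zmsucc_ne' (c : ZMod (q + 1)) : c + 1 ≠ c :=
  fun h => zm10' hq (by linear_combination h)

omit hq in
lemma wH_zero : wH q 0 = none := by simp [wH]

lemma wH_val_ne (j : ZMod (q + 1)) (hj : j ≠ 0) : 1 ≤ j.val ∧ j.val ≤ q := by
  haveI : NeZero (q + 1) := ⟨by omega⟩
  have h1 : j.val < q + 1 := ZMod.val_lt j
  have h2 : j.val ≠ 0 := fun h => hj ((ZMod.val_eq_zero j).mp h)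
  omega

lemma wH_inj : Function.Injective (wH q) := by
  haveI : NeZero (q + 1) := ⟨by omega⟩
  intro j j' h
  by_cases hj : j = 0 <;> by_cases hj' : j' = 0
  · rw [hj, hj']
  · rw [hj] at h; rw [wH_zero, wH, if_neg hj'] at h; exact absurd h (by simp)
  · rw [hj'] at h; rw [wH_zero, wH, if_neg hj] at h; exact absurd h (by simp)
  · rw [wH, wH, if_neg hj, if_neg hj'] at h
    have h2 : ((j.val : ℕ) : ZMod q) = ((j'.val : ℕ) : ZMod q) := by
      have := Sum.inl.inj (Option.some.inj h)
      linear_combination this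
    rw [ZMod.natCast_eq_natCast_iff'] at h2
    obtain ⟨ha1, ha2⟩ := wH_val_ne hq j hj
    obtain ⟨hb1, hb2⟩ := wH_val_ne hq j' hj'
    have hvv : j.val = j'.val := by
      rcases Nat.lt_or_ge j.val q with h3 | h3 <;> rcases Nat.lt_or_ge j'.val q with h4 | h4
      · rwa [Nat.mod_eq_of_lt h3, Nat.mod_eq_of_lt h4] at h2
      · have hb : j'.val = q := by omega
        rw [Nat.mod_eq_of_lt h3, hb, Nat.mod_self] at h2; omega
      · have ha : j.val = q := by omega
        rw [Nat.mod_eq_of_lt h4, ha, Nat.mod_self] at h2; omega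
      · omega
    calc j = ((j.val : ℕ) : ZMod (q + 1)) := (ZMod.natCast_zmod_val j).symm
    _ = ((j'.val : ℕ) : ZMod (q + 1)) := by rw [hvv]
    _ = j' := ZMod.natCast_zmod_val j'

lemma wH_surj_vtx (a : ZMod q) : ∃ j : ZMod (q + 1), j ≠ 0 ∧ wH q j = vtx a := by
  haveI : NeZero (q + 1) := ⟨by omega⟩
  by_cases ha : a = 1
  · refine ⟨-1, fun h => zm10' hq (by linear_combination -h), ?_⟩
    have hval : (-1 : ZMod (q + 1)).val = q := ZMod.val_neg_one q
    rw [wH, if_neg (fun h => zm10' hq (by linear_combination -h)), hval, ha]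
    have : ((q : ℕ) : ZMod q) = 0 := ZMod.natCast_self q
    rw [this, add_zero]
  · have h0 : a - 1 ≠ 0 := fun h => ha (by linear_combination h)
    set k := (a - 1).val with hk
    have hk1 : 1 ≤ k := by
      rcases Nat.eq_zero_or_pos k with h | h
      · exact absurd ((ZMod.val_eq_zero _).mp h) h0
      · exact h
    have hk2 : k < q := by
      haveI : NeZero q := ⟨by omega⟩
      exact ZMod.val_lt _
    refine ⟨(k : ZMod (q + 1)), zmod_natCast_ne_zero_s19 hk1 (by omega), ?_⟩
    rw [wH, if_neg (zmod_natCast_ne_zero_s19 hk1 (by omega)), ZMod.val_cast_of_lt (by omega)]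
    have : ((k : ℕ) : ZMod q) = a - 1 := by
      haveI : NeZero q := ⟨by omega⟩
      exact ZMod.natCast_zmod_val _
    rw [this]
    congr 1
    ring

lemma adj_wH : ∀ j : ZMod (q + 1), (graphH q).Adj (wH q j) (wH q (j + 1)) := by
  haveI : NeZero (q + 1) := ⟨by omega⟩
  haveI : Fact (1 < q + 1) := ⟨by omega⟩
  intro j
  by_cases hj : j = 0
  · subst hj
    have h1 : wH q (0 + 1) = vtx (2 : ZMod q) := by
      rw [zero_add, wH, if_neg (zm10' hq), ZMod.val_one]
      norm_num
    rw [wH_zero, h1]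
    exact adjH_x2
  · by_cases hj1 : j + 1 = 0
    · have hj' : j = -1 := by linear_combination hj1
      have hval : j.val = q := by rw [hj']; exact ZMod.val_neg_one q
      have h1 : wH q j = vtx (1 : ZMod q) := by
        rw [wH, if_neg hj, hval, ZMod.natCast_self, add_zero]
      rw [h1, hj1, wH_zero]
      exact adjH_x1.symm
    · obtain ⟨ha1, ha2⟩ := wH_val_ne hq j hj
      have hne : j.val ≠ q := by
        intro h
        apply hj1
        have h5 : j = ((j.val : ℕ) : ZMod (q + 1)) := (ZMod.natCast_zmod_val j).symm
        rw [h] at h5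
        rw [h5]
        have : ((q + 1 : ℕ) : ZMod (q + 1)) = 0 := ZMod.natCast_self _
        push_cast at this ⊢
        linear_combination this
      have hval : (j + 1).val = j.val + 1 := by
        rw [ZMod.val_add_of_lt]
        · rw [ZMod.val_one]
        · rw [ZMod.val_one]; omega
      have hA : ((j.val : ℕ) : ZMod q) ≠ 0 := zmod_natCast_ne_zero_s19 ha1 (by omega)
      have h1 : wH q j = vtx (1 + ((j.val : ℕ) : ZMod q)) := by rw [wH, if_neg hj]
      have h2 : wH q (j + 1) = vtx ((1 + ((j.val : ℕ) : ZMod q)) + 1) := by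
        rw [wH, if_neg hj1, hval]
        push_cast
        congr 1
        ring
      rw [h1, h2]
      exact adjH_vv hq _ (fun h => hA (by linear_combination h))

lemma connH : ∀ d, ((graphH q).induce ({d}ᶜ : Set _)).Connected := by
  intro d
  rw [SimpleGraph.connected_iff_exists_forall_reachable]
  rcases d with _ | (c | c)
  · -- deleted : none
    have hS : ∀ j : ZMod (q + 1), j ≠ 0 → wH q j ∈ ({(none : Option (ZMod q ⊕ ZMod q))}ᶜ : Set _) := by
      intro j hj
      rw [wH, if_neg hj]
      simp
    have R := cycle_reach (m := q + 1) (by omega) (wH q) (adj_wH hq) 0 hS (zmsucc_ne' hq 0)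
    have reachv : ∀ a : ZMod q, ∀ hm : vtx a ∈ ({(none : Option (ZMod q ⊕ ZMod q))}ᶜ : Set _),
        ((graphH q).induce _).Reachable ⟨vtx a, hm⟩ ⟨wH q (0 + 1), hS _ (zmsucc_ne' hq 0)⟩ := by
      intro a hm
      obtain ⟨j, hj0, hjv⟩ := wH_surj_vtx hq a
      exact reach_congr hjv.symm (R j hj0)
    refine ⟨⟨wH q (0 + 1), hS _ (zmsucc_ne' hq 0)⟩, ?_⟩
    rintro ⟨(_ | (a | a)), hx⟩
    · simp at hx
    · exact (reachv a hx).symm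
    · exact (step_reach hx (adjH_uv1 a) (reachv a (by simp))).symm
  · -- deleted : vtx c
    obtain ⟨j₀, hj₀0, hj₀⟩ := wH_surj_vtx hq c
    have hS : ∀ j : ZMod (q + 1), j ≠ j₀ → wH q j ∈ ({vtx c}ᶜ : Set _) := by
      intro j hj
      simpa using fun h => hj (wH_inj hq (h.trans hj₀.symm))
    have R := cycle_reach (m := q + 1) (by omega) (wH q) (adj_wH hq) j₀ hS (zmsucc_ne' hq j₀)
    set t : ↥({vtx c}ᶜ : Set (Option (ZMod q ⊕ ZMod q))) :=
      ⟨wH q (j₀ + 1), hS _ (zmsucc_ne' hq j₀)⟩ with ht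
    have reachv : ∀ a : ZMod q, a ≠ c → ∀ hm : vtx a ∈ ({vtx c}ᶜ : Set _),
        ((graphH q).induce _).Reachable ⟨vtx a, hm⟩ t := by
      intro a ha hm
      obtain ⟨j, hj0, hjv⟩ := wH_surj_vtx hq a
      have hjj : j ≠ j₀ := by
        intro h
        exact ha (Sum.inl.inj (Option.some.inj (hjv.symm.trans (by rw [h]; exact hj₀))))
      exact reach_congr hjv.symm (R j hjj)
    refine ⟨t, ?_⟩
    rintro ⟨(_ | (a | a)), hx⟩
    · -- none
      refine (reach_congr (wH_zero (q := q)).symm (R 0 (Ne.symm hj₀0))).symm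
    · exact (reachv a (by simpa using hx) hx).symm
    · -- utx a
      by_cases h1 : a = c
      · subst h1
        exact (step_reach (by simp) (adjH_uv2 a) (reachv (a + 1) (zmsucc_ne hq a) (vtx_mem_del (zmsucc_ne hq a)))).symm
      · exact (step_reach (by simp) (adjH_uv1 a) (reachv a h1 (vtx_mem_del h1))).symm
  · -- deleted : utx c
    have hS : ∀ j : ZMod (q + 1), j ≠ 0 → wH q j ∈ ({utx c}ᶜ : Set _) := by
      intro j hj
      rw [wH, if_neg hj]
      simp
    have R := cycle_reach (m := q + 1) (by omega) (wH q) (adj_wH hq) 0 hS (zmsucc_ne' hq 0)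
    set t : ↥({utx c}ᶜ : Set (Option (ZMod q ⊕ ZMod q))) :=
      ⟨wH q (0 + 1), hS _ (zmsucc_ne' hq 0)⟩ with ht
    have reachv : ∀ a : ZMod q, ∀ hm : vtx a ∈ ({utx c}ᶜ : Set _),
        ((graphH q).induce _).Reachable ⟨vtx a, hm⟩ t := by
      intro a hm
      obtain ⟨j, hj0, hjv⟩ := wH_surj_vtx hq a
      exact reach_congr hjv.symm (R j hj0)
    refine ⟨t, ?_⟩
    rintro ⟨(_ | (a | a)), hx⟩
    · -- none : wH 0, adjacent to wH (0+1)
      have h0 : (none : Option (ZMod q ⊕ ZMod q)) ∈ ({utx c}ᶜ : Set _) := by simp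
      have hadj : (graphH q).Adj none (wH q (0 + 1)) := by
        have := adj_wH hq 0
        rwa [wH_zero] at this
      exact ((induce_adj' (a := ⟨none, h0⟩) (b := t) hadj).reachable).symm
    · exact (reachv a hx).symm
    · exact (step_reach hx (adjH_uv1 a) (reachv a (by simp))).symm

end

/-- For every odd `n ≥ 9`, each of `F_n`, `G_n`, `H_n` is a 2-connected
graph of order `n` with exactly `(3n+1)/2` edges in which every edge lies in a
triangle. -/
theorem stmt_19 (n : ℕ) (hn : 9 ≤ n) (hodd : Odd n) :
    Nat.card (Option (ZMod ((n - 1) / 2) ⊕ ZMod ((n - 1) / 2))) = n ∧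
    (TwoConnected (graphF ((n - 1) / 2)) ∧
      numEdges (graphF ((n - 1) / 2)) = (3 * n + 1) / 2 ∧
      EveryEdgeInTriangle (graphF ((n - 1) / 2))) ∧
    (TwoConnected (graphG ((n - 1) / 2)) ∧
      numEdges (graphG ((n - 1) / 2)) = (3 * n + 1) / 2 ∧
      EveryEdgeInTriangle (graphG ((n - 1) / 2))) ∧
    (TwoConnected (graphH ((n - 1) / 2)) ∧
      numEdges (graphH ((n - 1) / 2)) = (3 * n + 1) / 2 ∧
      EveryEdgeInTriangle (graphH ((n - 1) / 2))) := by
  obtain ⟨m, hm⟩ := hodd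
  have hq : 4 ≤ (n - 1) / 2 := by omega
  set q := (n - 1) / 2 with hqdef
  have hn2 : n = 2 * q + 1 := by omega
  have hcard : Nat.card (Option (ZMod q ⊕ ZMod q)) = n := by
    haveI : NeZero q := ⟨by omega⟩
    simp only [Nat.card_eq_fintype_card, Fintype.card_option, Fintype.card_sum, ZMod.card]
    omega
  have h3 : (3 * n + 1) / 2 = 3 * q + 2 := by omega
  refine ⟨hcard, ⟨⟨by rw [hcard]; omega, connF hq⟩, by rw [numEdgesF hq, h3], triangleF hq⟩,
    ⟨⟨by rw [hcard]; omega, connG hq⟩, by rw [numEdgesG hq, h3], triangleG hq⟩,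
    ⟨⟨by rw [hcard]; omega, connH hq⟩, by rw [numEdgesH hq, h3], triangleH hq⟩⟩
end
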